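/- arXiv:2103.11419 — 8 statements merged into one kernel-verified Lean document; each statement's English description precedes it below -/
import Mathlib

section
/- There exist absolute constants C, c > 0 such that the following holds. Let q ≡ 3 (mod 4) be a prime power and let X be a subset of the paraboloid P ⊂ F_q³. If |X| ≥ C·q^{5/3}, then the number of non-trivial energy tuples in X satisfies E⁺_nt(X) ≥ c·|X|⁴/q³. -/
/-- The paraboloid `z = x² + y²` in `F³`. -/
def Paraboloid (F : Type) [Field F] : Set (F × F × F) :=
  {p | p.2.2 = p.1 ^ 2 + p.2.1 ^ 2}

/-- `(a, b, c, d)` is a non-trivial energy tuple: `a + b = c + d` and `a, b, c, d`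
are pairwise distinct. -/
def IsNontrivialEnergyTuple {F : Type} [Field F] (a b c d : F × F × F) : Prop :=
  a + b = c + d ∧ a ≠ b ∧ a ≠ c ∧ a ≠ d ∧ b ≠ c ∧ b ≠ d ∧ c ≠ d

/-!
By Cauchy–Schwarz over the `q³` possible sums, the additive energy of any `X ⊆ 𝔽_q³` is at least
`|X|⁴ / q³`. A quadruple with `a + b = c + d` and a repeated entry has the shape `(a, b, a, b)`,
`(a, b, b, a)`, `(a, a, c, 2a - c)` or `(a, 2c - a, c, c)`, so at most `4 |X|²` of the energy is
trivial, and once `|X|² ≥ 8 q³` (which `|X| ≥ 3 q^{5/3}` guarantees) that is at most half of it.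
-/

open Finset
open scoped Combinatorics.Additive Pointwise

section AddCommGroup

variable {G : Type*} [AddCommGroup G] [DecidableEq G]

def IsNontrivialAddQuadruple (t : G × G × G × G) : Prop :=
  t.1 + t.2.1 = t.2.2.1 + t.2.2.2 ∧ t.1 ≠ t.2.1 ∧ t.1 ≠ t.2.2.1 ∧ t.1 ≠ t.2.2.2 ∧
    t.2.1 ≠ t.2.2.1 ∧ t.2.1 ≠ t.2.2.2 ∧ t.2.2.1 ≠ t.2.2.2

instance : DecidablePred (IsNontrivialAddQuadruple (G := G)) :=
  fun _ => inferInstanceAs (Decidable (_ ∧ _))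

def addQuadruples (X : Finset G) : Finset (G × G × G × G) :=
  {t ∈ X ×ˢ X ×ˢ X ×ˢ X | t.1 + t.2.1 = t.2.2.1 + t.2.2.2}

lemma card_addQuadruples (X : Finset G) : #(addQuadruples X) = E[X] := by
  rw [addEnergy_eq_card_filter]
  refine card_equiv (Equiv.prodAssoc G G (G × G)).symm fun t => ?_
  simp [addQuadruples, and_assoc]

lemma filter_not_isNontrivialAddQuadruple_subset (X : Finset G) :
    {t ∈ addQuadruples X | ¬ IsNontrivialAddQuadruple t} ⊆
      (X ×ˢ X).image (fun p => (p.1, p.2, p.1, p.2)) ∪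
      (X ×ˢ X).image (fun p => (p.1, p.2, p.2, p.1)) ∪
      (X ×ˢ X).image (fun p => (p.1, p.1, p.2, p.1 + p.1 - p.2)) ∪
      (X ×ˢ X).image (fun p => (p.1, p.2 + p.2 - p.1, p.2, p.2)) := by
  intro t ht
  rw [mem_filter, addQuadruples, mem_filter] at ht
  simp only [mem_product, IsNontrivialAddQuadruple] at ht
  obtain ⟨a, b, c, d⟩ := t
  obtain ⟨⟨⟨ha, hb, hc, hd⟩, habcd⟩, hdeg⟩ := ht
  simp only [mem_union, mem_image, mem_product, Prod.exists, Prod.mk.injEq]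
  have hdeg' : a = b ∨ a = c ∨ a = d ∨ b = c ∨ b = d ∨ c = d := by tauto
  rcases hdeg' with rfl | rfl | rfl | rfl | rfl | rfl
  · exact Or.inl (Or.inr ⟨a, c, ⟨ha, hc⟩, rfl, rfl, rfl, by grind⟩)
  · exact Or.inl (Or.inl (Or.inl ⟨a, b, ⟨ha, hb⟩, rfl, rfl, rfl, by grind⟩))
  · exact Or.inl (Or.inl (Or.inr ⟨a, b, ⟨ha, hb⟩, rfl, rfl, by grind, rfl⟩))
  · exact Or.inl (Or.inl (Or.inr ⟨a, b, ⟨ha, hb⟩, rfl, rfl, rfl, by grind⟩))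
  · exact Or.inl (Or.inl (Or.inl ⟨a, b, ⟨ha, hb⟩, rfl, rfl, by grind, rfl⟩))
  · exact Or.inr ⟨a, c, ⟨ha, hc⟩, rfl, by grind, rfl, rfl⟩

lemma card_filter_not_isNontrivialAddQuadruple_le (X : Finset G) :
    #{t ∈ addQuadruples X | ¬ IsNontrivialAddQuadruple t} ≤ 4 * #X ^ 2 := by
  refine (card_le_card (filter_not_isNontrivialAddQuadruple_subset X)).trans ?_
  grw [card_union_le, card_union_le, card_union_le, card_image_le, card_image_le, card_image_le,
    card_image_le, card_product, ← sq]
  omega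

lemma addEnergy_le_card_filter_isNontrivialAddQuadruple_add (X : Finset G) :
    E[X] ≤ #{t ∈ X ×ˢ X ×ˢ X ×ˢ X | IsNontrivialAddQuadruple t} + 4 * #X ^ 2 := by
  have : {t ∈ addQuadruples X | IsNontrivialAddQuadruple t} =
      {t ∈ X ×ˢ X ×ˢ X ×ˢ X | IsNontrivialAddQuadruple t} := by
    rw [addQuadruples, filter_filter]
    exact filter_congr fun t _ => and_iff_right_of_imp And.left
  rw [← card_addQuadruples, ← card_filter_add_card_filter_not IsNontrivialAddQuadruple, this]
  gcongr
  exact card_filter_not_isNontrivialAddQuadruple_le X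

lemma card_pow_four_le_card_mul_addEnergy [Fintype G] (X : Finset G) :
    #X ^ 4 ≤ Fintype.card G * E[X] :=
  calc #X ^ 4 = #X ^ 2 * #X ^ 2 := by ring
    _ ≤ #(X + X) * E[X] := le_card_add_mul_addEnergy X X
    _ ≤ Fintype.card G * E[X] := by gcongr; exact card_le_univ _

lemma card_pow_four_le_card_mul_card_filter_isNontrivialAddQuadruple_add [Fintype G]
    (X : Finset G) :
    #X ^ 4 ≤ Fintype.card G * (#{t ∈ X ×ˢ X ×ˢ X ×ˢ X | IsNontrivialAddQuadruple t} + 4 * #X ^ 2) :=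
  (card_pow_four_le_card_mul_addEnergy X).trans <|
    Nat.mul_le_mul_left _ (addEnergy_le_card_filter_isNontrivialAddQuadruple_add X)

end AddCommGroup

lemma pow_three_le_rpow_five_thirds_sq {q : ℝ} (hq : 1 ≤ q) : q ^ 3 ≤ (q ^ ((5 : ℝ) / 3)) ^ 2 := by
  calc q ^ 3 = q ^ (3 : ℝ) := by norm_cast
    _ ≤ q ^ ((5 : ℝ) / 3 * 2) := Real.rpow_le_rpow_of_exponent_le hq (by norm_num)
    _ = (q ^ ((5 : ℝ) / 3)) ^ 2 := by rw [Real.rpow_mul (by linarith)]; norm_cast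

lemma half_mul_pow_four_div_le {n Q N : ℝ} (hQ : 0 < Q) (hn : 8 * Q ≤ n ^ 2)
    (h : n ^ 4 ≤ Q * (N + 4 * n ^ 2)) : 1 / 2 * n ^ 4 / Q ≤ N := by
  rw [div_le_iff₀ hQ]
  nlinarith [mul_le_mul_of_nonneg_right hn (sq_nonneg n)]

theorem stmt_0 :
    ∃ C c : ℝ, 0 < C ∧ 0 < c ∧
      ∀ (F : Type) [Field F] [Fintype F],
        Fintype.card F % 4 = 3 →
        ∀ X : Set (F × F × F), X ⊆ Paraboloid F →
          C * (Fintype.card F : ℝ) ^ ((5 : ℝ) / 3) ≤ (X.ncard : ℝ) →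
          c * (X.ncard : ℝ) ^ 4 / (Fintype.card F : ℝ) ^ 3 ≤
            (Set.ncard {t : (F × F × F) × (F × F × F) × (F × F × F) × (F × F × F) |
              t.1 ∈ X ∧ t.2.1 ∈ X ∧ t.2.2.1 ∈ X ∧ t.2.2.2 ∈ X ∧
              IsNontrivialEnergyTuple t.1 t.2.1 t.2.2.1 t.2.2.2} : ℝ) := by
  refine ⟨3, 1 / 2, by norm_num, by norm_num, fun F _ _ _ X _ hX => ?_⟩
  classical
  obtain ⟨X, rfl⟩ := X.toFinite.exists_finset_coe
  rw [Set.ncard_coe_finset] at hX ⊢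
  have hq : (1 : ℝ) ≤ Fintype.card F := by exact_mod_cast Fintype.card_pos
  have hX2 : 8 * (Fintype.card F : ℝ) ^ 3 ≤ (#X : ℝ) ^ 2 :=
    calc 8 * (Fintype.card F : ℝ) ^ 3 ≤ (3 * (Fintype.card F : ℝ) ^ ((5 : ℝ) / 3)) ^ 2 := by
          nlinarith [pow_three_le_rpow_five_thirds_sq hq]
      _ ≤ (#X : ℝ) ^ 2 := by gcongr
  have hcount := card_pow_four_le_card_mul_card_filter_isNontrivialAddQuadruple_add X
  rw [Fintype.card_prod, Fintype.card_prod, ← pow_three] at hcount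
  calc _ ≤ (#{t ∈ X ×ˢ X ×ˢ X ×ˢ X | IsNontrivialAddQuadruple t} : ℝ) :=
        half_mul_pow_four_div_le (by positivity) hX2 (by exact_mod_cast hcount)
    _ = _ := by
      rw [← Set.ncard_coe_finset]
      congr
      ext t
      simp only [coe_filter, mem_product, mem_coe, and_assoc]
      rfl
end

section
/- There exists an absolute constant c > 0 such that the following holds for all sufficiently large prime powers q ≡ 3 (mod 4). For any λ, β ∈ F_q^*, there exists a set X ⊂ P with |X| ≥ c·q^{5/3} such that X contains no non-trivial (λ, β)-energy tuple, i.e., there is no quadruple (a, b, c, d) ∈ X⁴ of pairwise distinct points with a + b = c + d whose projections a̲, c̲, b̲, d̲ form a rectangle in F_q² with side-lengths λ and β. -/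
/-- Projection of a point of `F³` onto its first two coordinates. -/
def proj {F : Type} [Field F] (p : F × F × F) : F × F := (p.1, p.2.1)

/-- The standard dot product on `F²`. -/
def dot2 {F : Type} [Field F] (u v : F × F) : F := u.1 * v.1 + u.2 * v.2

/-- Four points `x, z, y, t` of `F²` form a rectangle in this cyclic order. -/
def IsRect {F : Type} [Field F] (x z y t : F × F) : Prop :=
  dot2 (x - z) (y - z) = 0 ∧ dot2 (z - y) (t - y) = 0 ∧
    dot2 (y - t) (x - t) = 0 ∧ dot2 (t - x) (z - x) = 0

/-
An energy tuple in a set `X` lifted from `T ⊆ F²` to the paraboloid projects to a rectangle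
`z, z + u, z + v, z + u + v` inside `T` with `u ⊥ v` and side-lengths `{λ, β}`. For each `z`
there are `O(q)` such pairs `(u, v)`: `u` lies on a circle, which has at most `2q` points, and
`v ⊥ u` of prescribed length is determined by `u` up to sign. So `F²` contains `O(q³)` such
rectangles, and the deletion method finds a rectangle-free `T`: keep the zeros of a uniformly
random colouring `ω : F² → Fin M` (a random set of density `1/M`) and delete one corner of every
surviving rectangle. This leaves on average `q²/M - O(q³)/M⁴` points, which is `≫ q^{5/3}` for
`M ≈ 3q^{1/3}`.
-/

open Finset

section Deletion

variable {α : Type*} [DecidableEq α]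

theorem exists_hitting_finset (P : Finset (Finset α)) (hP : ∀ e ∈ P, e.Nonempty) :
    ∃ D : Finset α, #D ≤ #P ∧ ∀ e ∈ P, ∃ a ∈ e, a ∈ D := by
  choose f hf using hP
  exact ⟨P.attach.image fun e => f e.1 e.2, card_image_le.trans card_attach.le,
    fun e he => ⟨f e he, hf e he, mem_image_of_mem _ (mem_attach _ ⟨e, he⟩)⟩⟩

variable [Fintype α] {M : ℕ} [NeZero M]

theorem card_filter_forall_mem_eq_zero_mul_pow (W : Finset α) :
    #{ω : α → Fin M | ∀ a ∈ W, ω a = 0} * M ^ #W = M ^ Fintype.card α := by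
  have hpi : ({ω : α → Fin M | ∀ a ∈ W, ω a = 0} : Finset _)
      = Fintype.piFinset fun a => if a ∈ W then {0} else univ := by
    ext ω
    simp only [mem_filter, mem_univ, true_and, Fintype.mem_piFinset]
    refine forall_congr' fun a => ?_
    split_ifs <;> simp [*]
  have hW : M ^ #W = ∏ a, if a ∈ W then M else 1 := by
    rw [prod_ite_mem, univ_inter, prod_const]
  rw [hpi, Fintype.card_piFinset, hW, ← prod_mul_distrib, ← card_univ, ← prod_const]
  exact prod_congr rfl fun a _ => by split_ifs <;> simp

theorem sum_card_filter_eq_zero_mul :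
    ∑ ω : α → Fin M, #{a | ω a = 0} * M = Fintype.card α * M ^ Fintype.card α := by
  simp only [card_filter, sum_mul]
  rw [sum_comm, sum_const_nat (m := M ^ Fintype.card α) fun a _ => ?_, card_univ]
  rw [← sum_mul, ← card_filter, ← card_filter_forall_mem_eq_zero_mul_pow {a}, card_singleton,
    pow_one]
  simp

theorem sum_card_filter_forall_mem_eq_zero_mul_pow (E : Finset (Finset α)) {k : ℕ}
    (hE : ∀ e ∈ E, #e = k) :
    ∑ ω : α → Fin M, #{e ∈ E | ∀ a ∈ e, ω a = 0} * M ^ k = #E * M ^ Fintype.card α := by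
  simp only [card_filter, sum_mul]
  rw [sum_comm, sum_const_nat fun e he => ?_]
  rw [← sum_mul, ← card_filter, ← hE e he, card_filter_forall_mem_eq_zero_mul_pow]

theorem exists_large_finset_forall_not_subset (E : Finset (Finset α)) {k : ℕ} (hk : 0 < k)
    (hE : ∀ e ∈ E, #e = k) (M : ℕ) [NeZero M] :
    ∃ T : Finset α, (Fintype.card α : ℝ) / M - #E / M ^ k ≤ #T ∧ ∀ e ∈ E, ¬e ⊆ T := by
  obtain ⟨ω, -, hω⟩ : ∃ ω ∈ (univ : Finset (α → Fin M)),
      (Fintype.card α : ℝ) / M - #E / M ^ k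
        ≤ #{a | ω a = 0} - #{e ∈ E | ∀ a ∈ e, ω a = 0} := by
    refine exists_le_of_sum_le univ_nonempty (le_of_eq ?_)
    have hS : ∑ ω : α → Fin M, (#{a | ω a = 0} : ℝ)
        = Fintype.card α * M ^ Fintype.card α / M := by
      rw [eq_div_iff (NeZero.ne _ |> Nat.cast_ne_zero.2), sum_mul]
      exact_mod_cast sum_card_filter_eq_zero_mul
    have hP : ∑ ω : α → Fin M, (#{e ∈ E | ∀ a ∈ e, ω a = 0} : ℝ)
        = #E * M ^ Fintype.card α / M ^ k := by
      rw [eq_div_iff (pow_ne_zero _ (NeZero.ne _ |> Nat.cast_ne_zero.2)), sum_mul]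
      exact_mod_cast sum_card_filter_forall_mem_eq_zero_mul_pow E hE
    rw [sum_const, card_univ, Fintype.card_fun, Fintype.card_fin, nsmul_eq_mul, sum_sub_distrib,
      hS, hP]
    push_cast
    ring
  set S : Finset α := {a | ω a = 0}
  set P := {e ∈ E | ∀ a ∈ e, ω a = 0}
  obtain ⟨D, hD, hDhits⟩ := exists_hitting_finset P
    fun e he => card_pos.1 <| (hE e (mem_filter.1 he).1).symm ▸ hk
  refine ⟨S \ D, ?_, fun e he heT => ?_⟩
  · have hSD : (#S : ℝ) ≤ #(S \ D) + #D := by exact_mod_cast card_le_card_sdiff_add_card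
    have hDP : (#D : ℝ) ≤ #P := by exact_mod_cast hD
    linarith
  · obtain ⟨a, hae, haD⟩ := hDhits e <|
      mem_filter.2 ⟨he, fun a ha => (mem_filter.1 (mem_sdiff.1 (heT ha)).1).2⟩
    exact (mem_sdiff.1 (heT hae)).2 haD

end Deletion

theorem card_filter_sq_eq_le_two {R : Type*} [CommRing R] [IsDomain R] [Fintype R]
    [DecidableEq R] (a : R) : #{t : R | t ^ 2 = a} ≤ 2 :=
  calc #{t : R | t ^ 2 = a}
      ≤ #(Polynomial.nthRootsFinset 2 a) :=
        card_le_card fun t ht => (Polynomial.mem_nthRootsFinset two_pos a).2 (mem_filter.1 ht).2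
    _ ≤ 2 := by
      rw [Polynomial.nthRootsFinset_def]
      exact (Multiset.toFinset_card_le _).trans (Polynomial.card_nthRoots 2 a)

section Corners

variable {G : Type*} [AddCommGroup G] [DecidableEq G]

def rectCorners (z u v : G) : Finset G := {z, z + u, z + v, z + u + v}

theorem card_rectCorners {z u v : G} (hu : u ≠ 0) (hv : v ≠ 0) (huv : u ≠ v) (huv' : u + v ≠ 0) :
    #(rectCorners z u v) = 4 := by
  have h1 : z ≠ z + u := by simpa using hu
  have h2 : z ≠ z + v := by simpa using hv
  have h3 : z ≠ z + u + v := by simpa [add_assoc] using huv'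
  have h4 : z + u ≠ z + v := by simpa using huv
  have h5 : z + u ≠ z + u + v := by simpa using hv
  have h6 : z + v ≠ z + u + v := by simpa [add_right_comm z u v] using hu
  simp [rectCorners, card_insert_of_notMem, *]

theorem rectCorners_sub_sub {x y z t : G} (h : x + y = z + t) :
    rectCorners z (x - z) (y - z) = {z, x, y, t} := by
  have ht : x + (y - z) = t := by
    rw [← add_right_inj z, ← h]; abel
  simp only [rectCorners, add_sub_cancel, ht]

end Corners

theorem le_div_sub_div_pow_four {r M C : ℝ} (hr : 0 < r) (hM : 3 * r ≤ M) (hM' : M ≤ 4 * r)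
    (hC : C ≤ 8 * r ^ 9) : r ^ 5 / 8 ≤ r ^ 6 / M - C / M ^ 4 := by
  have h1 : r ^ 5 / 4 ≤ r ^ 6 / M := by
    rw [div_le_div_iff₀ (by norm_num) (by linarith)]
    nlinarith [pow_pos hr 5]
  have hM0 : 0 < M := by linarith
  have h2 : C / M ^ 4 ≤ 8 * r ^ 5 / 81 := by
    rw [div_le_div_iff₀ (by positivity) (by norm_num)]
    have : (3 * r) ^ 4 ≤ M ^ 4 := by gcongr
    nlinarith [pow_pos hr 5]
  linarith [pow_pos hr 5]

section Plane

variable {F : Type} [Field F]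

theorem eq_smul_rot_of_dot2_eq_zero {u v : F × F} (hu : dot2 u u ≠ 0) (h : dot2 u v = 0) :
    v = (dot2 (-u.2, u.1) v / dot2 u u) • (-u.2, u.1) := by
  have hu' : u.1 ^ 2 + u.2 ^ 2 ≠ 0 := by simpa only [dot2, sq] using hu
  simp only [dot2] at h ⊢
  ext <;> simp only [Prod.smul_fst, Prod.smul_snd, smul_eq_mul] <;> field_simp
  · linear_combination u.1 * h
  · linear_combination u.2 * h

variable [Fintype F] [DecidableEq F]

theorem card_filter_dot2_self_eq_le (a : F) :
    #{u : F × F | dot2 u u = a} ≤ 2 * Fintype.card F := by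
  rw [card_filter, Fintype.sum_prod_type, mul_comm, ← card_univ, ← smul_eq_mul]
  refine sum_le_card_nsmul _ _ _ fun x _ => ?_
  rw [← card_filter]
  refine (card_le_card fun y hy => ?_).trans (card_filter_sq_eq_le_two (a - x ^ 2))
  obtain ⟨-, hy⟩ := mem_filter.1 hy
  simp only [mem_filter, mem_univ, true_and]
  linear_combination (by simpa only [dot2] using hy : x * x + y * y = a)

def sidePairs (a b : F) : Finset ((F × F) × (F × F)) :=
  {p | dot2 p.1 p.2 = 0 ∧ dot2 p.1 p.1 = a ∧ dot2 p.2 p.2 = b}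

theorem mem_sidePairs {a b : F} {p : (F × F) × (F × F)} :
    p ∈ sidePairs a b ↔ dot2 p.1 p.2 = 0 ∧ dot2 p.1 p.1 = a ∧ dot2 p.2 p.2 = b := by
  simp [sidePairs]

theorem card_sidePairs_le {a : F} (ha : a ≠ 0) (b : F) :
    #(sidePairs a b) ≤ 4 * Fintype.card F := by
  have hsub : sidePairs a b ⊆ (({u : F × F | dot2 u u = a} : Finset _) ×ˢ
      ({s : F | s ^ 2 = b / a} : Finset _)).image fun p => (p.1, p.2 • (-p.1.2, p.1.1)) := by
    intro p hp
    obtain ⟨hperp, hu, hv⟩ := mem_sidePairs.1 hp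
    have hp2 := eq_smul_rot_of_dot2_eq_zero (hu ▸ ha) hperp
    refine mem_image.2 ⟨(p.1, dot2 (-p.1.2, p.1.1) p.2 / dot2 p.1 p.1), ?_, by rw [← hp2]⟩
    simp only [mem_product, mem_filter, mem_univ, true_and]
    refine ⟨hu, ?_⟩
    rw [eq_div_iff ha, ← hu, ← hv]
    conv_rhs => rw [hp2]
    simp only [dot2, Prod.smul_fst, Prod.smul_snd, smul_eq_mul]
    ring
  calc #(sidePairs a b) ≤ #{u : F × F | dot2 u u = a} * #{s : F | s ^ 2 = b / a} :=
        (card_le_card hsub).trans (card_image_le.trans (card_product _ _).le)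
    _ ≤ 2 * Fintype.card F * 2 :=
        Nat.mul_le_mul (card_filter_dot2_self_eq_le a) (card_filter_sq_eq_le_two _)
    _ = 4 * Fintype.card F := by ring

theorem card_rectCorners_of_mem_sidePairs {a b : F} (ha : a ≠ 0) (hb : b ≠ 0)
    {p : (F × F) × (F × F)} (hp : p ∈ sidePairs a b) (z : F × F) :
    #(rectCorners z p.1 p.2) = 4 := by
  obtain ⟨hperp, hu, hv⟩ := mem_sidePairs.1 hp
  have hne : ∀ w : F × F, dot2 w w ≠ 0 → w ≠ 0 := fun w hw h0 => hw (by simp [h0, dot2])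
  refine card_rectCorners (hne _ (hu ▸ ha)) (hne _ (hv ▸ hb)) (fun h => ?_) (fun h => ?_)
  · exact hb (by simpa [h, hv] using hperp)
  · simp only [eq_neg_of_add_eq_zero_right h, dot2, Prod.fst_neg, Prod.snd_neg] at hperp hu
    exact ha (by linear_combination -hu - hperp)

theorem exists_large_finset_forall_not_rectCorners_subset {lam bet : F} (hlam : lam ≠ 0)
    (hbet : bet ≠ 0) :
    ∃ T : Finset (F × F), (Fintype.card F : ℝ) ^ ((5 : ℝ) / 3) / 8 ≤ #T ∧
      ∀ z, ∀ p ∈ sidePairs lam bet ∪ sidePairs bet lam, ¬rectCorners z p.1 p.2 ⊆ T := by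
  set q := Fintype.card F
  set r : ℝ := (q : ℝ) ^ ((1 : ℝ) / 3)
  have hq : (1 : ℝ) ≤ q := by exact_mod_cast Fintype.card_pos
  have hr : 1 ≤ r := Real.one_le_rpow hq (by norm_num)
  have hr3 : r ^ 3 = q := by
    rw [← Real.rpow_natCast, ← Real.rpow_mul (by positivity)]; norm_num
  have hr5 : r ^ 5 = (q : ℝ) ^ ((5 : ℝ) / 3) := by
    rw [← Real.rpow_natCast, ← Real.rpow_mul (by positivity)]; norm_num
  set M := ⌈3 * r⌉₊
  have : NeZero M := ⟨(Nat.ceil_pos.2 (by positivity)).ne'⟩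
  set E := ((univ : Finset (F × F)) ×ˢ (sidePairs lam bet ∪ sidePairs bet lam)).image
    fun c => rectCorners c.1 c.2.1 c.2.2
  have hE : ∀ e ∈ E, #e = 4 := by
    simp only [E, mem_image, mem_product, mem_union]
    rintro _ ⟨⟨z, p⟩, ⟨-, hp | hp⟩, rfl⟩
    exacts [card_rectCorners_of_mem_sidePairs hlam hbet hp z,
      card_rectCorners_of_mem_sidePairs hbet hlam hp z]
  have hEcard : #E ≤ q * q * (8 * q) :=
    calc #E ≤ Fintype.card (F × F) * #(sidePairs lam bet ∪ sidePairs bet lam) :=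
          card_image_le.trans (card_product _ _).le
      _ ≤ q * q * (4 * q + 4 * q) := by
          rw [Fintype.card_prod]
          gcongr
          exact (card_union_le _ _).trans
            (add_le_add (card_sidePairs_le hlam bet) (card_sidePairs_le hbet lam))
      _ = q * q * (8 * q) := by ring
  obtain ⟨T, hT, hfree⟩ := exists_large_finset_forall_not_subset E four_pos hE M
  refine ⟨T, ?_, fun z p hp =>
    hfree _ (mem_image.2 ⟨(z, p), mem_product.2 ⟨mem_univ z, hp⟩, rfl⟩)⟩
  have hM : 3 * r ≤ M := Nat.le_ceil _
  have hM' : (M : ℝ) ≤ 4 * r := by linarith [Nat.ceil_lt_add_one (by positivity : 0 ≤ 3 * r)]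
  have hEr : (#E : ℝ) ≤ 8 * r ^ 9 := by
    have : (#E : ℝ) ≤ q * q * (8 * q) := by exact_mod_cast hEcard
    linear_combination this - 8 * (r ^ 6 + r ^ 3 * q + q ^ 2) * hr3
  calc (q : ℝ) ^ ((5 : ℝ) / 3) / 8 = r ^ 5 / 8 := by rw [hr5]
    _ ≤ r ^ 6 / M - #E / M ^ 4 := le_div_sub_div_pow_four (by positivity) hM hM' hEr
    _ = Fintype.card (F × F) / M - #E / M ^ 4 := by
        rw [Fintype.card_prod, Nat.cast_mul, ← hr3]; ring
    _ ≤ #T := hT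

end Plane

section Paraboloid

variable {F : Type} [Field F]

def paraboloidLift (s : F × F) : F × F × F := (s.1, s.2, s.1 ^ 2 + s.2 ^ 2)

theorem paraboloidLift_mem (s : F × F) : paraboloidLift s ∈ Paraboloid F := rfl

theorem proj_paraboloidLift (s : F × F) : proj (paraboloidLift s) = s := rfl

theorem paraboloidLift_injective : Function.Injective (paraboloidLift (F := F)) :=
  Function.LeftInverse.injective proj_paraboloidLift

theorem proj_add (a b : F × F × F) : proj (a + b) = proj a + proj b := rfl

theorem dot2_sub_self_comm (u v : F × F) : dot2 (u - v) (u - v) = dot2 (v - u) (v - u) := by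
  simp only [dot2, Prod.fst_sub, Prod.snd_sub]; ring

end Paraboloid

theorem stmt_3 :
    ∃ c : ℝ, 0 < c ∧
      ∃ q₀ : ℕ,
        ∀ (F : Type) [Field F] [Fintype F],
          q₀ ≤ Fintype.card F →
          Fintype.card F % 4 = 3 →
          ∀ lam bet : F, lam ≠ 0 → bet ≠ 0 →
            ∃ X : Set (F × F × F), X ⊆ Paraboloid F ∧
              c * (Fintype.card F : ℝ) ^ ((5 : ℝ) / 3) ≤ (X.ncard : ℝ) ∧
              ¬∃ a b cc d : F × F × F,
                a ∈ X ∧ b ∈ X ∧ cc ∈ X ∧ d ∈ X ∧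
                a + b = cc + d ∧
                a ≠ b ∧ a ≠ cc ∧ a ≠ d ∧ b ≠ cc ∧ b ≠ d ∧ cc ≠ d ∧
                IsRect (proj a) (proj cc) (proj b) (proj d) ∧
                ((dot2 (proj a - proj cc) (proj a - proj cc) = lam ∧
                  dot2 (proj cc - proj b) (proj cc - proj b) = bet) ∨
                 (dot2 (proj a - proj cc) (proj a - proj cc) = bet ∧
                  dot2 (proj cc - proj b) (proj cc - proj b) = lam)) := by
  refine ⟨1 / 8, by norm_num, 0, fun F _ _ _ _ lam bet hlam hbet => ?_⟩
  classical
  obtain ⟨T, hT, hfree⟩ := exists_large_finset_forall_not_rectCorners_subset hlam hbet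
  refine ⟨paraboloidLift '' T, ?_, ?_, ?_⟩
  · rintro _ ⟨s, -, rfl⟩
    exact paraboloidLift_mem s
  · rw [Set.ncard_image_of_injective _ paraboloidLift_injective, Set.ncard_coe_finset]
    linarith
  · rintro ⟨_, _, _, _, ⟨x, hx, rfl⟩, ⟨y, hy, rfl⟩, ⟨z, hz, rfl⟩, ⟨t, ht, rfl⟩, hsum,
      -, -, -, -, -, -, hrect, hsides⟩
    simp only [proj_paraboloidLift] at hrect hsides
    have hxy : x + y = z + t := by
      simpa only [proj_add, proj_paraboloidLift] using congrArg proj hsum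
    refine hfree z (x - z, y - z) ?_ ?_
    · rw [dot2_sub_self_comm z y] at hsides
      simp only [mem_union, mem_sidePairs]
      rcases hsides with ⟨h₁, h₂⟩ | ⟨h₁, h₂⟩
      exacts [Or.inl ⟨hrect.1, h₁, h₂⟩, Or.inr ⟨hrect.1, h₁, h₂⟩]
    · rw [rectCorners_sub_sub hxy]
      simp only [insert_subset_iff, singleton_subset_iff]
      exact ⟨hz, hx, hy, ht⟩
end

section
/- Let q ≡ 3 (mod 4) be a prime power and let a, b, c, d be points on the paraboloid P ⊂ F_q³. Then a + b = c + d if and only if the four projected points a̲, c̲, b̲, d̲ form a rectangle in F_q² (in this cyclic order). -/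
/-!
The four rectangle conditions add up to `|x + y - z - t|² = 0`, and since `-1` is not a square
in `F` the form `u₁² + u₂²` is anisotropic, so a rectangle is a parallelogram: `x + y = z + t`.
For a parallelogram the four conditions coincide up to sign, and each one is equivalent to
`|x|² + |y|² = |z|² + |t|²`. On the paraboloid the last coordinate is `|p̲|²`, so `a + b = c + d`
says exactly that `a̲, c̲, b̲, d̲` is a parallelogram satisfying this norm identity.
-/

theorem not_isSquare_neg_one_of_card_mod_four_eq_three {F : Type} [Field F] [Fintype F]
    (hq : Fintype.card F % 4 = 3) : ¬IsSquare (-1 : F) := by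
  rw [FiniteField.isSquare_neg_one_iff]
  omega

section

variable {F : Type} [Field F]

theorem two_ne_zero_of_not_isSquare_neg_one (h : ¬IsSquare (-1 : F)) : (2 : F) ≠ 0 := by
  intro h2
  apply h
  rw [show (-1 : F) = 1 by linear_combination -h2]
  exact IsSquare.one

theorem dot2_self_eq_zero_iff (h : ¬IsSquare (-1 : F)) {u : F × F} : dot2 u u = 0 ↔ u = 0 := by
  obtain ⟨u₁, u₂⟩ := u
  simp only [dot2, Prod.mk_eq_zero]
  refine ⟨fun hu => ?_, fun ⟨h₁, h₂⟩ => by simp [h₁, h₂]⟩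
  rcases eq_or_ne u₂ 0 with rfl | hu₂
  · exact ⟨by simpa using hu, rfl⟩
  · exact absurd ⟨u₁ / u₂, by field_simp; linear_combination -hu⟩ h

theorem dot2_rect_sum (x z y t : F × F) :
    dot2 (x - z) (y - z) + dot2 (z - y) (t - y) + dot2 (y - t) (x - t) + dot2 (t - x) (z - x) =
      dot2 (x + y - z - t) (x + y - z - t) := by
  simp only [dot2, Prod.fst_sub, Prod.snd_sub, Prod.fst_add, Prod.snd_add]
  ring

theorem IsRect.add_eq_add (h : ¬IsSquare (-1 : F)) {x z y t : F × F} (hr : IsRect x z y t) :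
    x + y = z + t := by
  obtain ⟨h₁, h₂, h₃, h₄⟩ := hr
  have h0 := dot2_rect_sum x z y t
  rw [h₁, h₂, h₃, h₄, add_zero, add_zero, add_zero, eq_comm, dot2_self_eq_zero_iff h] at h0
  exact sub_eq_zero.1 (by simpa [sub_sub] using h0)

theorem isRect_iff_of_add_eq_add (h2 : (2 : F) ≠ 0) {x z y t : F × F} (hs : x + y = z + t) :
    IsRect x z y t ↔ dot2 x x + dot2 y y = dot2 z z + dot2 t t := by
  obtain rfl : t = x + y - z := by rw [hs]; abel
  obtain ⟨x₁, x₂⟩ := x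
  obtain ⟨y₁, y₂⟩ := y
  obtain ⟨z₁, z₂⟩ := z
  simp only [IsRect, dot2, Prod.mk_sub_mk, Prod.mk_add_mk]
  -- each of the four conditions is `±(|z|² + |t|² - |x|² - |y|²) / 2 = 0`
  have key : ∀ e : F, 2 * e = 0 ↔ e = 0 := fun e => by simp [h2]
  constructor
  · rintro ⟨h₁, -, -, -⟩
    linear_combination -2 * h₁
  · intro hn
    refine ⟨(key _).1 ?_, (key _).1 ?_, (key _).1 ?_, (key _).1 ?_⟩ <;>
      first
        | linear_combination -hn
        | linear_combination hn
end

theorem mem_paraboloid_iff {F : Type} [Field F] {p : F × F × F} :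
    p ∈ Paraboloid F ↔ p.2.2 = dot2 (proj p) (proj p) := by
  simp only [Paraboloid, Set.mem_ofPred_eq, dot2, proj, sq]

theorem add_eq_add_iff_proj_and_snd_snd {F : Type} [Field F] (a b c d : F × F × F) :
    a + b = c + d ↔ proj a + proj b = proj c + proj d ∧ a.2.2 + b.2.2 = c.2.2 + d.2.2 := by
  simp only [Prod.ext_iff, proj, Prod.fst_add, Prod.snd_add, and_assoc]

theorem stmt_4 (F : Type) [Field F] [Fintype F]
    (hq : Fintype.card F % 4 = 3)
    (a b c d : F × F × F)
    (ha : a ∈ Paraboloid F) (hb : b ∈ Paraboloid F)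
    (hc : c ∈ Paraboloid F) (hd : d ∈ Paraboloid F) :
    a + b = c + d ↔ IsRect (proj a) (proj c) (proj b) (proj d) := by
  have hsq := not_isSquare_neg_one_of_card_mod_four_eq_three hq
  have h2 := two_ne_zero_of_not_isSquare_neg_one hsq
  rw [mem_paraboloid_iff] at ha hb hc hd
  rw [add_eq_add_iff_proj_and_snd_snd, ha, hb, hc, hd]
  constructor
  · rintro ⟨hs, hn⟩
    exact (isRect_iff_of_add_eq_add h2 hs).2 hn
  · intro hr
    have hs := hr.add_eq_add hsq
    exact ⟨hs, (isRect_iff_of_add_eq_add h2 hs).1 hr⟩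
end

section
/- There exist absolute constants C, c > 0 such that the following holds. Let q ≡ 3 (mod 4) be a prime power and let S be a subset of F_q². If |S| ≥ C·q^{5/3}, then the number of quadruples (x, z, y, t) ∈ S⁴ that form a rectangle with both side-lengths nonzero is at least c·|S|⁴/q³. -/
lemma aniso {F : Type} [Field F] [Fintype F] (hq : Fintype.card F % 4 = 3)
    {v : F × F} (h : dot2 v v = 0) : v = 0 := by
  have hns : ¬ IsSquare (-1 : F) := by
    rw [FiniteField.isSquare_neg_one_iff]; simp [hq]
  by_contra hv
  unfold dot2 at h
  rcases eq_or_ne v.2 0 with h2 | h2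
  · rcases eq_or_ne v.1 0 with h1 | h1
    · exact hv (Prod.ext_iff.mpr ⟨h1, h2⟩)
    · exact h1 (mul_self_eq_zero.mp (by linear_combination h - v.2 * h2))
  · exact hns ⟨v.1 / v.2, by field_simp; linear_combination -h⟩

lemma two_ne {F : Type} [Field F] [Fintype F] (hq : Fintype.card F % 4 = 3) :
    (2 : F) ≠ 0 := by
  intro h
  have hns : ¬ IsSquare (-1 : F) := by
    rw [FiniteField.isSquare_neg_one_iff]; simp [hq]
  exact hns ⟨1, by linear_combination -h⟩

lemma rect_char {F : Type} [Field F] (h2 : (2:F) ≠ 0)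
    (haniso : ∀ v : F × F, dot2 v v = 0 → v = 0) (x z y t : F × F) :
    (IsRect x z y t ∧ dot2 (x - z) (x - z) ≠ 0 ∧ dot2 (z - y) (z - y) ≠ 0) ↔
      (x + y = z + t ∧ dot2 (x - y) (x - y) = dot2 (z - t) (z - t) ∧
        (z, t) ≠ (x, y) ∧ (z, t) ≠ (y, x)) := by
  constructor
  · rintro ⟨⟨c1, c2, c3, c4⟩, s1, s2⟩
    unfold dot2 at c1 c2 c3 c4
    simp only [Prod.fst_sub, Prod.snd_sub] at c1 c2 c3 c4
    have key : dot2 ((y - z) - (t - x)) ((y - z) - (t - x)) = 0 := by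
      unfold dot2
      simp only [Prod.fst_sub, Prod.snd_sub]
      linear_combination c1 + c2 + c3 + c4
    have hab : y - z = t - x := sub_eq_zero.mp (haniso _ key)
    have ht : t = x + y - z := by linear_combination -hab
    subst ht
    refine ⟨by ring, ?_, ?_, ?_⟩
    · unfold dot2
      simp only [Prod.fst_sub, Prod.snd_sub, Prod.fst_add, Prod.snd_add]
      linear_combination (-4 : F) * c1
    · intro h
      have hz : z = x := congrArg Prod.fst h
      subst hz
      exact s1 (by simp [dot2])
    · intro h
      have hz : z = y := congrArg Prod.fst h
      subst hz
      exact s2 (by simp [dot2])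
  · rintro ⟨hsum, hlen, hne1, hne2⟩
    have ht : t = x + y - z := by linear_combination -hsum
    subst ht
    have hzx : x - z ≠ 0 := by
      intro h
      apply hne1
      have hz : z = x := by linear_combination -h
      subst hz
      exact Prod.ext_iff.mpr ⟨rfl, by ring⟩
    have hzy : y - z ≠ 0 := by
      intro h
      apply hne2
      have hz : z = y := by linear_combination -h
      subst hz
      exact Prod.ext_iff.mpr ⟨rfl, by ring⟩
    unfold dot2 at hlen
    simp only [Prod.fst_sub, Prod.snd_sub, Prod.fst_add, Prod.snd_add] at hlen
    have h4 : (4 : F) ≠ 0 := by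
      intro h
      rcases mul_eq_zero.mp (show (2:F) * 2 = 0 by linear_combination h) with h' | h' <;>
        exact h2 h'
    have horth : (x.1 - z.1) * (y.1 - z.1) + (x.2 - z.2) * (y.2 - z.2) = 0 := by
      have h4' : (4 : F) * ((x.1 - z.1) * (y.1 - z.1) + (x.2 - z.2) * (y.2 - z.2)) = 0 := by
        linear_combination -hlen
      rcases mul_eq_zero.mp h4' with h | h
      · exact absurd h h4
      · exact h
    refine ⟨⟨?_, ?_, ?_, ?_⟩, ?_, ?_⟩
    · unfold dot2; simp only [Prod.fst_sub, Prod.snd_sub]; linear_combination horth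
    · unfold dot2
      simp only [Prod.fst_sub, Prod.snd_sub, Prod.fst_add, Prod.snd_add]
      linear_combination -horth
    · unfold dot2
      simp only [Prod.fst_sub, Prod.snd_sub, Prod.fst_add, Prod.snd_add]
      linear_combination horth
    · unfold dot2
      simp only [Prod.fst_sub, Prod.snd_sub, Prod.fst_add, Prod.snd_add]
      linear_combination -horth
    · exact fun h => hzx (haniso _ h)
    · intro h
      exact hzy (by linear_combination -(haniso _ h))

lemma pair_count {α β : Type*} [Fintype β] [DecidableEq β] (T : Finset α) (k : α → β) :
    (T.card : ℝ) ^ 2 ≤ (Fintype.card β : ℝ) *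
      ((((T ×ˢ T).filter (fun p => k p.1 = k p.2)).card : ℝ)) := by
  classical
  have h1 : T.card = ∑ b : β, (T.filter fun a => k a = b).card :=
    Finset.card_eq_sum_card_fiberwise (fun a _ => Finset.mem_univ (k a))
  have h2 : ((T ×ˢ T).filter fun p => k p.1 = k p.2).card
      = ∑ b : β, ((T.filter fun a => k a = b).card) ^ 2 := by
    rw [Finset.card_eq_sum_card_fiberwise
      (f := fun p : α × α => k p.1) (t := Finset.univ) (fun a _ => Finset.mem_univ _)]
    refine Finset.sum_congr rfl fun b _ => ?_
    have he : (((T ×ˢ T).filter fun p => k p.1 = k p.2).filter fun p => k p.1 = b)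
        = (T.filter fun a => k a = b) ×ˢ (T.filter fun a => k a = b) := by
      ext p
      simp only [Finset.mem_filter, Finset.mem_product]
      constructor
      · rintro ⟨⟨⟨m1, m2⟩, m3⟩, m4⟩
        exact ⟨⟨m1, m4⟩, m2, m3 ▸ m4⟩
      · rintro ⟨⟨m1, m2⟩, m3, m4⟩
        exact ⟨⟨⟨m1, m3⟩, m2.trans m4.symm⟩, m2⟩
    rw [he, Finset.card_product]
    ring
  have cs := Finset.sum_mul_sq_le_sq_mul_sq Finset.univ (fun _ : β => (1:ℝ))
      (fun b => ((T.filter fun a => k a = b).card : ℝ))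
  simp only [one_mul, one_pow] at cs
  calc (T.card : ℝ) ^ 2 = (∑ b : β, ((T.filter fun a => k a = b).card : ℝ)) ^ 2 := by
        rw [h1]; push_cast; rfl
    _ ≤ (∑ _b : β, (1:ℝ)) * ∑ b : β, ((T.filter fun a => k a = b).card : ℝ) ^ 2 := cs
    _ = (Fintype.card β : ℝ) * ((((T ×ˢ T).filter (fun p => k p.1 = k p.2)).card : ℝ)) := by
        rw [h2]
        push_cast
        simp [Finset.card_univ]

lemma remove_diag {γ : Type*} [DecidableEq γ] (T : Finset (γ × γ))
    (E : Finset ((γ × γ) × (γ × γ))) (hE : E ⊆ T ×ˢ T) :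
    E.card ≤ (E.filter fun pp => pp.2 ≠ pp.1 ∧ pp.2 ≠ (pp.1.2, pp.1.1)).card + 2 * T.card := by
  classical
  have hsplit := Finset.card_filter_add_card_filter_not
    (s := E) (p := fun pp => pp.2 ≠ pp.1 ∧ pp.2 ≠ (pp.1.2, pp.1.1))
  have hbad : (E.filter fun pp => ¬(pp.2 ≠ pp.1 ∧ pp.2 ≠ (pp.1.2, pp.1.1))) ⊆
      (T.image fun a => (a, a)) ∪ (T.image fun a => (a, (a.2, a.1))) := by
    intro pp hpp
    simp only [Finset.mem_filter, not_and_or, not_not] at hpp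
    obtain ⟨hmem, hc⟩ := hpp
    have h1 : pp.1 ∈ T := (Finset.mem_product.mp (hE hmem)).1
    rcases hc with hc | hc
    · apply Finset.mem_union_left
      exact Finset.mem_image.mpr ⟨pp.1, h1, Prod.ext_iff.mpr ⟨rfl, hc.symm⟩⟩
    · apply Finset.mem_union_right
      exact Finset.mem_image.mpr ⟨pp.1, h1, Prod.ext_iff.mpr ⟨rfl, hc.symm⟩⟩
  have hbadcard : (E.filter fun pp => ¬(pp.2 ≠ pp.1 ∧ pp.2 ≠ (pp.1.2, pp.1.1))).card ≤ 2 * T.card := by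
    calc _ ≤ ((T.image fun a => (a, a)) ∪ (T.image fun a => (a, (a.2, a.1)))).card :=
          Finset.card_le_card hbad
      _ ≤ (T.image fun a => (a, a)).card + (T.image fun a => (a, (a.2, a.1))).card :=
          Finset.card_union_le _ _
      _ ≤ T.card + T.card := add_le_add (Finset.card_image_le) (Finset.card_image_le)
      _ = 2 * T.card := by ring
  omega

theorem stmt_5 :
    ∃ C c : ℝ, 0 < C ∧ 0 < c ∧
      ∀ (F : Type) [Field F] [Fintype F],
        Fintype.card F % 4 = 3 →
        ∀ S : Set (F × F),
          C * (Fintype.card F : ℝ) ^ ((5 : ℝ) / 3) ≤ (S.ncard : ℝ) →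
          c * (S.ncard : ℝ) ^ 4 / (Fintype.card F : ℝ) ^ 3 ≤
            (Set.ncard {p : (F × F) × (F × F) × (F × F) × (F × F) |
              p.1 ∈ S ∧ p.2.1 ∈ S ∧ p.2.2.1 ∈ S ∧ p.2.2.2 ∈ S ∧
              IsRect p.1 p.2.1 p.2.2.1 p.2.2.2 ∧
              dot2 (p.1 - p.2.1) (p.1 - p.2.1) ≠ 0 ∧
              dot2 (p.2.1 - p.2.2.1) (p.2.1 - p.2.2.1) ≠ 0} : ℝ) := by
  classical
  refine ⟨2, 1/2, by norm_num, by norm_num, ?_⟩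
  intro F _ _ hq S hS
  have h2F : (2:F) ≠ 0 := two_ne hq
  have haniso : ∀ v : F × F, dot2 v v = 0 → v = 0 := fun v h => aniso hq h
  set s : Finset (F × F) := S.toFinset with hs
  have hncard : S.ncard = s.card := Set.ncard_eq_toFinset_card' S
  set q : ℕ := Fintype.card F with hqdef
  have hq1 : (1:ℝ) ≤ (q:ℝ) := by exact_mod_cast Fintype.card_pos
  set k : (F×F) × (F×F) → (F×F) × F :=
    fun p => (p.1 + p.2, dot2 (p.1 - p.2) (p.1 - p.2)) with hk
  set T : Finset ((F×F) × (F×F)) := s ×ˢ s with hT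
  set E : Finset (((F×F) × (F×F)) × ((F×F) × (F×F))) :=
    (T ×ˢ T).filter (fun pp => k pp.1 = k pp.2) with hE
  set D : Finset (((F×F) × (F×F)) × ((F×F) × (F×F))) :=
    E.filter (fun pp => pp.2 ≠ pp.1 ∧ pp.2 ≠ (pp.1.2, pp.1.1)) with hD
  set R : Finset ((F×F) × (F×F) × (F×F) × (F×F)) := Finset.univ.filter (fun p =>
    p.1 ∈ S ∧ p.2.1 ∈ S ∧ p.2.2.1 ∈ S ∧ p.2.2.2 ∈ S ∧
    IsRect p.1 p.2.1 p.2.2.1 p.2.2.2 ∧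
    dot2 (p.1 - p.2.1) (p.1 - p.2.1) ≠ 0 ∧
    dot2 (p.2.1 - p.2.2.1) (p.2.1 - p.2.2.1) ≠ 0) with hR
  have hsetR : {p : (F × F) × (F × F) × (F × F) × (F × F) |
      p.1 ∈ S ∧ p.2.1 ∈ S ∧ p.2.2.1 ∈ S ∧ p.2.2.2 ∈ S ∧
      IsRect p.1 p.2.1 p.2.2.1 p.2.2.2 ∧
      dot2 (p.1 - p.2.1) (p.1 - p.2.1) ≠ 0 ∧
      dot2 (p.2.1 - p.2.2.1) (p.2.1 - p.2.2.1) ≠ 0} = ↑R := by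
    ext p
    simp [hR]
  rw [hsetR, Set.ncard_coe_finset, hncard]
  rw [hncard] at hS
  -- bijection between R and D
  have hbij : R.card = D.card := by
    apply Finset.card_bij (fun p _ => ((p.1, p.2.2.1), (p.2.1, p.2.2.2)))
    · intro p hp
      simp only [hR, Finset.mem_filter, Finset.mem_univ, true_and] at hp
      obtain ⟨m1, m2, m3, m4, hrect, hs1, hs2⟩ := hp
      obtain ⟨e1, e2, e3, e4⟩ :=
        (rect_char h2F haniso p.1 p.2.1 p.2.2.1 p.2.2.2).mp ⟨hrect, hs1, hs2⟩
      simp only [hD, hE, hT, Finset.mem_filter, Finset.mem_product]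
      refine ⟨⟨⟨⟨?_, ?_⟩, ?_, ?_⟩, ?_⟩, ?_, ?_⟩
      · exact Set.mem_toFinset.mpr m1
      · exact Set.mem_toFinset.mpr m3
      · exact Set.mem_toFinset.mpr m2
      · exact Set.mem_toFinset.mpr m4
      · exact Prod.ext_iff.mpr ⟨e1, e2⟩
      · exact e3
      · exact e4
    · intro p1 h1 p2 h2 h
      simp only [Prod.mk.injEq] at h
      obtain ⟨⟨ha, hb⟩, hc, hd⟩ := h
      exact Prod.ext_iff.mpr ⟨ha, Prod.ext_iff.mpr ⟨hc, Prod.ext_iff.mpr ⟨hb, hd⟩⟩⟩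
    · intro b hb
      simp only [hD, hE, hT, Finset.mem_filter, Finset.mem_product] at hb
      obtain ⟨⟨⟨⟨mx, my⟩, mz, mt⟩, hkeq⟩, hne1, hne2⟩ := hb
      obtain ⟨e1, e2⟩ := Prod.ext_iff.mp hkeq
      have hne1' : (b.2.1, b.2.2) ≠ (b.1.1, b.1.2) := by
        simpa using hne1
      have hne2' : (b.2.1, b.2.2) ≠ (b.1.2, b.1.1) := by
        simpa using hne2
      obtain ⟨hrect, hs1, hs2⟩ :=
        (rect_char h2F haniso b.1.1 b.2.1 b.1.2 b.2.2).mpr ⟨e1, e2, hne1', hne2'⟩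
      refine ⟨(b.1.1, b.2.1, b.1.2, b.2.2), ?_, ?_⟩
      · simp only [hR, Finset.mem_filter, Finset.mem_univ, true_and]
        exact ⟨Set.mem_toFinset.mp mx, Set.mem_toFinset.mp mz,
          Set.mem_toFinset.mp my, Set.mem_toFinset.mp mt, hrect, hs1, hs2⟩
      · simp
  rw [hbij]
  set n : ℝ := (s.card : ℝ) with hn
  have hTcard : T.card = s.card * s.card := by
    rw [hT, Finset.card_product]
  have hcardβ : ((Fintype.card ((F×F) × F)) : ℝ) = (q:ℝ)^3 := by
    simp only [Fintype.card_prod, hqdef]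
    push_cast
    ring
  have hq0 : (0:ℝ) < (q:ℝ)^3 := by positivity
  have hA : n^4 ≤ (q:ℝ)^3 * (E.card : ℝ) := by
    have hpc := pair_count T k
    rw [hcardβ] at hpc
    calc n^4 = ((T.card : ℝ))^2 := by rw [hTcard]; push_cast; ring
      _ ≤ _ := hpc
  have hB : (E.card : ℝ) ≤ (D.card : ℝ) + 2 * n^2 := by
    have hrd := remove_diag T E (Finset.filter_subset _ _)
    rw [hTcard] at hrd
    have : (E.card : ℝ) ≤ (D.card : ℝ) + 2 * ((s.card : ℝ) * (s.card : ℝ)) := by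
      exact_mod_cast hrd
    nlinarith [this]
  have hC : 4 * (q:ℝ)^3 ≤ n^2 := by
    have ha0 : (0:ℝ) ≤ (q:ℝ)^((5:ℝ)/3) := Real.rpow_nonneg (by linarith) _
    have h1 : (q:ℝ)^((5:ℝ)/3) * (q:ℝ)^((5:ℝ)/3) = (q:ℝ)^((10:ℝ)/3) := by
      rw [← Real.rpow_add (by linarith)]
      norm_num
    have h2 : ((q:ℝ)^(3:ℕ)) ≤ (q:ℝ)^((10:ℝ)/3) := by
      have h3 : (q:ℝ)^(3:ℕ) = (q:ℝ)^((3:ℕ):ℝ) := (Real.rpow_natCast _ 3).symm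
      rw [h3]
      apply Real.rpow_le_rpow_of_exponent_le hq1
      norm_num
    have h4 : ((q:ℝ)^(3:ℕ)) = (q:ℝ)^3 := by norm_num
    nlinarith [hS, ha0, h1, h2, h4]
  rw [div_le_iff₀ hq0]
  nlinarith [mul_le_mul_of_nonneg_right hC (sq_nonneg n),
    mul_le_mul_of_nonneg_left hB (le_of_lt hq0), hA]
end

section
/- There exists an absolute constant c > 0 such that for all sufficiently large prime powers q ≡ 3 (mod 4) there exists a set X ⊂ P with |X| ≥ c·q such that every energy tuple in X is trivial, i.e., there is no quadruple (a, b, c, d) ∈ X⁴ of pairwise distinct points with a + b = c + d. -/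
theorem stmt_7 :
    ∃ c : ℝ, 0 < c ∧
      ∃ q₀ : ℕ,
        ∀ (F : Type) [Field F] [Fintype F],
          q₀ ≤ Fintype.card F →
          Fintype.card F % 4 = 3 →
          ∃ X : Set (F × F × F), X ⊆ Paraboloid F ∧
            c * (Fintype.card F : ℝ) ≤ (X.ncard : ℝ) ∧
            ¬∃ a b cc d : F × F × F,
              a ∈ X ∧ b ∈ X ∧ cc ∈ X ∧ d ∈ X ∧
              a + b = cc + d ∧
              a ≠ b ∧ a ≠ cc ∧ a ≠ d ∧ b ≠ cc ∧ b ≠ d ∧ cc ≠ d := by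
  refine ⟨1, one_pos, 1, fun F _ _ _ hmod => ?_⟩
  have hchar : ringChar F ≠ 2 := by
    intro h
    have := FiniteField.even_card_of_char_two h
    omega
  have htwo : (2 : F) ≠ 0 := Ring.two_ne_zero hchar
  set f : F → F × F × F := fun x => (x, 0, x ^ 2) with hf
  have hinj : Function.Injective f := by
    intro x y h
    exact congrArg Prod.fst h
  refine ⟨Set.range f, ?_, ?_, ?_⟩
  · rintro p ⟨x, rfl⟩
    simp [Paraboloid, hf]
  · have : (Set.range f).ncard = Fintype.card F := by
      rw [← Nat.card_coe_set_eq, Nat.card_range_of_injective hinj,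
        Nat.card_eq_fintype_card]
    rw [this, one_mul]
  · rintro ⟨a, b, cc, d, ⟨x1, rfl⟩, ⟨x2, rfl⟩, ⟨x3, rfl⟩, ⟨x4, rfl⟩,
      hsum, hab, hac, had, hbc, hbd, hcd⟩
    simp only [hf, Prod.mk_add_mk, Prod.mk.injEq] at hsum
    obtain ⟨h1, -, h2⟩ := hsum
    have hx13 : x1 ≠ x3 := fun h => hac (by rw [hf, h])
    have hx14 : x1 ≠ x4 := fun h => had (by rw [hf, h])
    have key : (x1 - x3) * (x1 - x4) = 0 := by
      have hp : x1 * x2 = x3 * x4 := by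
        have e : (2 : F) * (x1 * x2) = (2 : F) * (x3 * x4) := by
          linear_combination (x1 + x2 + x3 + x4) * h1 - h2
        exact mul_left_cancel₀ htwo e
      linear_combination x1 * h1 - hp
    rcases mul_eq_zero.mp key with h | h
    · exact hx13 (sub_eq_zero.mp h)
    · exact hx14 (sub_eq_zero.mp h)
end

section
/- There exists an absolute constant C > 0 such that the following holds. Let q be a prime power, let A be a multiplicative subgroup of F_q^* with |A| ≥ q^{2/3}, and let σ : F_q → ℝ be defined by σ(x) = q/|A| if x ∈ A and σ(x) = 0 otherwise. Then for all functions f₁, f₂, f₃, f₄ : F_q² → [−1, 1], |N(f₁, f₂, f₃, f₄)| ≤ min_{1 ≤ j ≤ 4} ‖f_j‖_□ + C·q^{1/8}/|A|^{1/4}. -/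
/-- `M(f₁, f₂, f₃, f₄) = q⁻⁴ Σ_{a,b,c,d} f₁(a,c) f₂(a,d) f₃(b,c) f₄(b,d)`. -/
noncomputable def Mform {F : Type} [Fintype F] (f₁ f₂ f₃ f₄ : F × F → ℝ) : ℝ :=
  (∑ a : F, ∑ b : F, ∑ c : F, ∑ d : F,
    f₁ (a, c) * f₂ (a, d) * f₃ (b, c) * f₄ (b, d)) / (Fintype.card F : ℝ) ^ 4

/-- The box norm `‖f‖_□ = M(f, f, f, f)^{1/4}`. -/
noncomputable def boxNorm {F : Type} [Fintype F] (f : F × F → ℝ) : ℝ :=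
  (Mform f f f f) ^ ((1 : ℝ) / 4)

/-- `N(f₁, f₂, f₃, f₄) = q⁻⁴ Σ_{a,b,c,d} f₁(a,c) f₂(a,d) f₃(b,c) f₄(b,d) σ(a−b) σ(c−d)`. -/
noncomputable def Nform {F : Type} [Field F] [Fintype F]
    (f₁ f₂ f₃ f₄ : F × F → ℝ) (σ : F → ℝ) : ℝ :=
  (∑ a : F, ∑ b : F, ∑ c : F, ∑ d : F,
    f₁ (a, c) * f₂ (a, d) * f₃ (b, c) * f₄ (b, d) * σ (a - b) * σ (c - d)) /
    (Fintype.card F : ℝ) ^ 4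

/-!
Write `σ = 1 + s`, where `s = σ - 1` has mean zero. Expanding `N` in `s` leaves the main term `M`
plus three error terms, each a combination of convolution sums `∑_{a,b} g(a) h(b) s(a - b)` with
`|g|, |h| ≤ 1`. For a primitive additive character `ψ` and `ŝ(ξ) = ∑_x s(x) ψ(ξx)`, Parseval bounds
such a sum by `q · max_ξ |ŝ(ξ)|`, and `ŝ(ξ) = (q/|A|) ∑_{u ∈ A} ψ(ξu)` for `ξ ≠ 0`. This character
sum is constant on the coset `ξA`, so averaging over the coset and applying Parseval gives
`|∑_{u ∈ A} ψ(ξu)|² ≤ q`. Hence `|N - M| ≤ 4√q/|A|`, which is at most `4 q^{1/8}/|A|^{1/4}` because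
`√q ≤ q^{2/3} ≤ |A|`. Finally `|M| ≤ ∏ ‖f_j‖_□ ≤ min_j ‖f_j‖_□` by the Gowers–Cauchy–Schwarz
inequality, i.e. Cauchy–Schwarz once in the columns and once in the rows.
-/

open Finset

theorem sum_four_comm {α β γ δ M : Type*} [Fintype α] [Fintype β] [Fintype γ] [Fintype δ]
    [AddCommMonoid M] (X : α → β → γ → δ → M) :
    ∑ a, ∑ b, ∑ c, ∑ d, X a b c d = ∑ c, ∑ d, ∑ a, ∑ b, X a b c d :=
  calc ∑ a, ∑ b, ∑ c, ∑ d, X a b c d = ∑ p : α × β, ∑ r : γ × δ, X p.1 p.2 r.1 r.2 := by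
        simp only [Fintype.sum_prod_type]
    _ = ∑ r : γ × δ, ∑ p : α × β, X p.1 p.2 r.1 r.2 := sum_comm
    _ = _ := by simp only [Fintype.sum_prod_type]

theorem abs_mul_le_one {x y : ℝ} (hx : |x| ≤ 1) (hy : |y| ≤ 1) : |x * y| ≤ 1 := by
  rw [abs_mul]
  exact mul_le_one₀ hx (abs_nonneg _) hy

theorem sq_sum_mul_div_le {ι : Type*} (s : Finset ι) (x y : ι → ℝ) (D : ℝ) :
    ((∑ i ∈ s, x i * y i) / D) ^ 2 ≤ ((∑ i ∈ s, x i * x i) / D) * ((∑ i ∈ s, y i * y i) / D) := by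
  rw [div_pow, div_mul_div_comm, ← sq]
  gcongr
  simpa only [sq] using sum_mul_sq_le_sq_mul_sq s x y

section BoxNorm

variable {F : Type} [Fintype F]

theorem Mform_eq_sum_cols (f₁ f₂ f₃ f₄ : F × F → ℝ) :
    Mform f₁ f₂ f₃ f₄ = (∑ p : F × F,
      (∑ a, f₁ (a, p.1) * f₂ (a, p.2)) * ∑ b, f₃ (b, p.1) * f₄ (b, p.2)) /
        (Fintype.card F : ℝ) ^ 4 := by
  rw [Mform, sum_four_comm, Fintype.sum_prod_type]
  simp_rw [sum_mul_sum]
  congr 1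
  exact sum_congr rfl fun c _ => sum_congr rfl fun d _ => sum_congr rfl fun a _ =>
    sum_congr rfl fun b _ => by ring

theorem Mform_eq_sum_rows (f₁ f₂ f₃ f₄ : F × F → ℝ) :
    Mform f₁ f₂ f₃ f₄ = (∑ p : F × F,
      (∑ c, f₁ (p.1, c) * f₃ (p.2, c)) * ∑ d, f₂ (p.1, d) * f₄ (p.2, d)) /
        (Fintype.card F : ℝ) ^ 4 := by
  rw [Mform, Fintype.sum_prod_type]
  simp_rw [sum_mul_sum]
  congr 1
  exact sum_congr rfl fun a _ => sum_congr rfl fun b _ => sum_congr rfl fun c _ =>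
    sum_congr rfl fun d _ => by ring

theorem Mform_sq_le_cols (f₁ f₂ f₃ f₄ : F × F → ℝ) :
    Mform f₁ f₂ f₃ f₄ ^ 2 ≤ Mform f₁ f₂ f₁ f₂ * Mform f₃ f₄ f₃ f₄ := by
  simpa only [Mform_eq_sum_cols] using sq_sum_mul_div_le univ _ _ _

theorem Mform_sq_le_rows (f₁ f₂ : F × F → ℝ) :
    Mform f₁ f₂ f₁ f₂ ^ 2 ≤ Mform f₁ f₁ f₁ f₁ * Mform f₂ f₂ f₂ f₂ := by
  simpa only [Mform_eq_sum_rows] using sq_sum_mul_div_le univ _ _ _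

theorem Mform_self_nonneg (f : F × F → ℝ) : 0 ≤ Mform f f f f := by
  rw [Mform_eq_sum_cols]
  exact div_nonneg (sum_nonneg fun _ _ => mul_self_nonneg _) (by positivity)

theorem Mform_pow_four_le (f₁ f₂ f₃ f₄ : F × F → ℝ) :
    Mform f₁ f₂ f₃ f₄ ^ 4 ≤
      Mform f₁ f₁ f₁ f₁ * Mform f₂ f₂ f₂ f₂ * (Mform f₃ f₃ f₃ f₃ * Mform f₄ f₄ f₄ f₄) :=
  calc Mform f₁ f₂ f₃ f₄ ^ 4 = (Mform f₁ f₂ f₃ f₄ ^ 2) ^ 2 := by ring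
    _ ≤ (Mform f₁ f₂ f₁ f₂ * Mform f₃ f₄ f₃ f₄) ^ 2 := by
        gcongr
        exact Mform_sq_le_cols f₁ f₂ f₃ f₄
    _ = Mform f₁ f₂ f₁ f₂ ^ 2 * Mform f₃ f₄ f₃ f₄ ^ 2 := mul_pow _ _ _
    _ ≤ _ := mul_le_mul (Mform_sq_le_rows f₁ f₂) (Mform_sq_le_rows f₃ f₄) (sq_nonneg _)
        (mul_nonneg (Mform_self_nonneg f₁) (Mform_self_nonneg f₂))

theorem boxNorm_nonneg (f : F × F → ℝ) : 0 ≤ boxNorm f :=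
  Real.rpow_nonneg (Mform_self_nonneg f) _

theorem boxNorm_pow_four (f : F × F → ℝ) : boxNorm f ^ 4 = Mform f f f f := by
  rw [boxNorm, one_div, ← Nat.cast_ofNat, Real.rpow_inv_natCast_pow (Mform_self_nonneg f)
    four_ne_zero]

theorem abs_Mform_le_prod_boxNorm (f₁ f₂ f₃ f₄ : F × F → ℝ) :
    |Mform f₁ f₂ f₃ f₄| ≤ boxNorm f₁ * boxNorm f₂ * (boxNorm f₃ * boxNorm f₄) := by
  have := boxNorm_nonneg f₁
  have := boxNorm_nonneg f₂
  have := boxNorm_nonneg f₃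
  have := boxNorm_nonneg f₄
  rw [← pow_le_pow_iff_left₀ (abs_nonneg _) (by positivity) four_ne_zero]
  simpa only [pow_abs, mul_pow, boxNorm_pow_four, Even.pow_abs ⟨2, rfl⟩] using
    Mform_pow_four_le f₁ f₂ f₃ f₄

theorem abs_Mform_le_one {f₁ f₂ f₃ f₄ : F × F → ℝ} (hf₁ : ∀ x, |f₁ x| ≤ 1)
    (hf₂ : ∀ x, |f₂ x| ≤ 1) (hf₃ : ∀ x, |f₃ x| ≤ 1) (hf₄ : ∀ x, |f₄ x| ≤ 1) :
    |Mform f₁ f₂ f₃ f₄| ≤ 1 := by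
  rw [Mform, abs_div, abs_of_nonneg (by positivity : (0 : ℝ) ≤ (Fintype.card F : ℝ) ^ 4)]
  refine div_le_one_of_le₀ ?_ (by positivity)
  simp only [← Fintype.sum_prod_type']
  refine (abs_sum_le_sum_abs _ _).trans ?_
  calc ∑ x : F × F × F × F, |f₁ (x.1, x.2.2.1) * f₂ (x.1, x.2.2.2) * f₃ (x.2.1, x.2.2.1) *
        f₄ (x.2.1, x.2.2.2)| ≤ ∑ _x : F × F × F × F, (1 : ℝ) := by
        refine sum_le_sum fun x _ => ?_
        exact abs_mul_le_one (abs_mul_le_one (abs_mul_le_one (hf₁ _) (hf₂ _)) (hf₃ _)) (hf₄ _)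
    _ = (Fintype.card F : ℝ) ^ 4 := by simp; ring

theorem boxNorm_le_one {f : F × F → ℝ} (hf : ∀ x, |f x| ≤ 1) : boxNorm f ≤ 1 :=
  Real.rpow_le_one (Mform_self_nonneg f) (le_of_abs_le (abs_Mform_le_one hf hf hf hf))
    (by norm_num)

theorem abs_Mform_le_min_boxNorm {f₁ f₂ f₃ f₄ : F × F → ℝ} (hf₁ : ∀ x, |f₁ x| ≤ 1)
    (hf₂ : ∀ x, |f₂ x| ≤ 1) (hf₃ : ∀ x, |f₃ x| ≤ 1) (hf₄ : ∀ x, |f₄ x| ≤ 1) :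
    |Mform f₁ f₂ f₃ f₄| ≤
      min (min (boxNorm f₁) (boxNorm f₂)) (min (boxNorm f₃) (boxNorm f₄)) := by
  have n₁ := boxNorm_nonneg f₁
  have n₂ := boxNorm_nonneg f₂
  have n₃ := boxNorm_nonneg f₃
  have n₄ := boxNorm_nonneg f₄
  have u₁ := boxNorm_le_one hf₁
  have u₂ := boxNorm_le_one hf₂
  have u₃ := boxNorm_le_one hf₃
  have u₄ := boxNorm_le_one hf₄
  refine (abs_Mform_le_prod_boxNorm f₁ f₂ f₃ f₄).trans ?_
  refine le_min (le_min ?_ ?_) (le_min ?_ ?_) <;>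
    nlinarith [mul_nonneg n₁ n₂, mul_nonneg n₃ n₄, mul_le_one₀ u₁ n₂ u₂, mul_le_one₀ u₃ n₄ u₄]

end BoxNorm

section Fourier

variable {R : Type*} [CommRing R] [Fintype R]

def dft (ψ : AddChar R ℂ) (g : R → ℂ) (ξ : R) : ℂ := ∑ a, g a * ψ (ξ * a)

variable {ψ : AddChar R ℂ}

theorem sum_norm_sq_sum_mul_char (hψ : ψ.IsPrimitive) {ι : Type*} [Fintype ι] {e : ι → R}
    (he : Function.Injective e) (g : ι → ℂ) :
    ∑ ξ : R, ‖∑ i, g i * ψ (ξ * e i)‖ ^ 2 = Fintype.card R * ∑ i, ‖g i‖ ^ 2 := by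
  classical
  have hψe (i j : ι) :
      ∑ ξ : R, ψ (ξ * (e i - e j)) = if i = j then (Fintype.card R : ℂ) else 0 := by
    rw [AddChar.sum_mulShift _ hψ, sub_eq_zero, he.eq_iff, Nat.cast_ite, Nat.cast_zero]
  apply Complex.ofReal_injective
  push_cast
  simp_rw [← Complex.mul_conj', map_sum, map_mul, ← AddChar.map_neg_eq_conj, sum_mul_sum,
    mul_sum]
  calc ∑ ξ : R, ∑ i, ∑ j, g i * ψ (ξ * e i) * ((starRingEnd ℂ) (g j) * ψ (-(ξ * e j)))
      = ∑ i, ∑ j, g i * (starRingEnd ℂ) (g j) * ∑ ξ : R, ψ (ξ * (e i - e j)) := by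
        rw [sum_comm]
        refine sum_congr rfl fun i _ => ?_
        rw [sum_comm]
        refine sum_congr rfl fun j _ => ?_
        rw [mul_sum]
        refine sum_congr rfl fun ξ _ => ?_
        rw [mul_sub, sub_eq_add_neg, AddChar.map_add_eq_mul]
        ring
    _ = _ := by simp [hψe, mul_comm]

theorem sum_norm_sq_dft_le (hψ : ψ.IsPrimitive) {g : R → ℂ} (hg : ∀ a, ‖g a‖ ≤ 1) :
    ∑ ξ, ‖dft ψ g ξ‖ ^ 2 ≤ (Fintype.card R : ℝ) ^ 2 := by
  have hg2 : ∑ a, ‖g a‖ ^ 2 ≤ Fintype.card R := by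
    simpa using sum_le_sum fun a (_ : a ∈ univ) => pow_le_one₀ (norm_nonneg (g a)) (hg a)
  calc ∑ ξ, ‖dft ψ g ξ‖ ^ 2 = Fintype.card R * ∑ a, ‖g a‖ ^ 2 :=
        sum_norm_sq_sum_mul_char hψ Function.injective_id g
    _ ≤ (Fintype.card R : ℝ) ^ 2 := by rw [sq]; gcongr

theorem sum_dft_mul_dft_neg_mul_dft_neg (hψ : ψ.IsPrimitive) (g h s : R → ℂ) :
    ∑ ξ, dft ψ g ξ * dft ψ h (-ξ) * dft ψ s (-ξ) =
      Fintype.card R * ∑ a, ∑ b, g a * h b * s (a - b) := by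
  classical
  have hψ' (a b x : R) : ∑ ξ : R, ψ (ξ * (a - b - x)) =
      if a - b = x then (Fintype.card R : ℂ) else 0 := by
    rw [AddChar.sum_mulShift _ hψ, sub_eq_zero, Nat.cast_ite, Nat.cast_zero]
  calc ∑ ξ, dft ψ g ξ * dft ψ h (-ξ) * dft ψ s (-ξ)
      = ∑ ξ, ∑ a, ∑ b, ∑ x, g a * h b * s x * ψ (ξ * (a - b - x)) := by
        refine sum_congr rfl fun ξ _ => ?_
        rw [dft, dft, dft, sum_mul_sum, sum_mul]
        refine sum_congr rfl fun a _ => ?_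
        rw [sum_mul]
        refine sum_congr rfl fun b _ => ?_
        rw [mul_sum]
        refine sum_congr rfl fun x _ => ?_
        rw [mul_sub, mul_sub, sub_eq_add_neg, sub_eq_add_neg, AddChar.map_add_eq_mul,
          AddChar.map_add_eq_mul, neg_mul, neg_mul]
        ring
    _ = ∑ a, ∑ b, ∑ x, g a * h b * s x * ∑ ξ : R, ψ (ξ * (a - b - x)) := by
        simp_rw [mul_sum]
        rw [sum_comm]
        refine sum_congr rfl fun a _ => ?_
        rw [sum_comm]
        exact sum_congr rfl fun b _ => sum_comm
    _ = _ := by simp [hψ', mul_sum, mul_comm]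

theorem norm_sum_mul_mul_sub_le (hψ : ψ.IsPrimitive) {g h s : R → ℂ} {K : ℝ}
    (hs : ∀ ξ, ‖dft ψ s ξ‖ ≤ K) (hg : ∀ a, ‖g a‖ ≤ 1) (hh : ∀ b, ‖h b‖ ≤ 1) :
    ‖∑ a, ∑ b, g a * h b * s (a - b)‖ ≤ K * Fintype.card R := by
  have hq : (0 : ℝ) < Fintype.card R := by exact_mod_cast Fintype.card_pos
  have hK : 0 ≤ K := (norm_nonneg _).trans (hs 0)
  have hh' : ∑ ξ, ‖dft ψ h (-ξ)‖ ^ 2 ≤ (Fintype.card R : ℝ) ^ 2 :=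
    (Fintype.sum_equiv (Equiv.neg R) _ _ fun _ => rfl).trans_le (sum_norm_sq_dft_le hψ hh)
  refine le_of_mul_le_mul_left ?_ hq
  calc Fintype.card R * ‖∑ a, ∑ b, g a * h b * s (a - b)‖
      = ‖∑ ξ, dft ψ g ξ * dft ψ h (-ξ) * dft ψ s (-ξ)‖ := by
        rw [sum_dft_mul_dft_neg_mul_dft_neg hψ, norm_mul, Complex.norm_natCast]
    _ ≤ ∑ ξ, K * ((‖dft ψ g ξ‖ ^ 2 + ‖dft ψ h (-ξ)‖ ^ 2) / 2) := by
        refine norm_sum_le_of_le _ fun ξ _ => ?_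
        rw [norm_mul, norm_mul, mul_comm]
        gcongr
        · exact hs _
        · nlinarith [sq_nonneg (‖dft ψ g ξ‖ - ‖dft ψ h (-ξ)‖)]
    _ = K * ((∑ ξ, ‖dft ψ g ξ‖ ^ 2 + ∑ ξ, ‖dft ψ h (-ξ)‖ ^ 2) / 2) := by
        rw [← mul_sum, ← sum_div, sum_add_distrib]
    _ ≤ K * (((Fintype.card R : ℝ) ^ 2 + (Fintype.card R : ℝ) ^ 2) / 2) := by
        gcongr
        exact sum_norm_sq_dft_le hψ hg
    _ = Fintype.card R * (K * Fintype.card R) := by ring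

theorem abs_sum_mul_mul_sub_le (hψ : ψ.IsPrimitive) {g h s : R → ℝ} {K : ℝ}
    (hs : ∀ ξ, ‖dft ψ (fun x => (s x : ℂ)) ξ‖ ≤ K) (hg : ∀ a, |g a| ≤ 1) (hh : ∀ b, |h b| ≤ 1) :
    |∑ a, ∑ b, g a * h b * s (a - b)| ≤ K * Fintype.card R := by
  have hcast : ((∑ a, ∑ b, g a * h b * s (a - b) : ℝ) : ℂ) =
      ∑ a, ∑ b, (g a : ℂ) * (h b : ℂ) * (s (a - b) : ℂ) := by
    push_cast
    rfl
  rw [← Real.norm_eq_abs, ← Complex.norm_real, hcast]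
  have := norm_sum_mul_mul_sub_le (g := fun a => (g a : ℂ)) (h := fun b => (h b : ℂ)) hψ hs
    (by simpa using hg) (by simpa using hh)
  exact this

end Fourier

theorem norm_sq_sum_char_subgroup_le {F : Type*} [Field F] [Fintype F] {ψ : AddChar F ℂ}
    (hψ : ψ.IsPrimitive) (A : Subgroup Fˣ) [Fintype A] {ξ : F} (hξ : ξ ≠ 0) :
    ‖∑ u : A, ψ (ξ * ((u : Fˣ) : F))‖ ^ 2 ≤ Fintype.card F := by
  set S : F → ℂ := fun η => ∑ u : A, ψ (η * ((u : Fˣ) : F))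
  have hS_mul (t : A) : S (ξ * ((t : Fˣ) : F)) = S ξ := by
    simp only [S, mul_assoc]
    exact Equiv.sum_comp (Equiv.mulLeft t) (fun u : A => ψ (ξ * ((u : Fˣ) : F)))
  have hS_total : ∑ η, ‖S η‖ ^ 2 = Fintype.card F * Fintype.card A := by
    have hinj : Function.Injective (fun u : A => ((u : Fˣ) : F)) :=
      Units.val_injective.comp Subtype.val_injective
    simpa [S] using sum_norm_sq_sum_mul_char hψ hinj (fun _ => 1)
  have hmul_inj : Function.Injective (fun t : A => ξ * ((t : Fˣ) : F)) :=
    (mul_right_injective₀ hξ).comp (Units.val_injective.comp Subtype.val_injective)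
  have hcard : (0 : ℝ) < Fintype.card A := by exact_mod_cast Fintype.card_pos
  refine le_of_mul_le_mul_left ?_ hcard
  calc (Fintype.card A : ℝ) * ‖S ξ‖ ^ 2 = ∑ t : A, ‖S (ξ * ((t : Fˣ) : F))‖ ^ 2 := by
        simp [hS_mul]
    _ = ∑ η ∈ univ.map ⟨_, hmul_inj⟩, ‖S η‖ ^ 2 :=
        (sum_map univ ⟨_, hmul_inj⟩ fun η => ‖S η‖ ^ 2).symm
    _ ≤ ∑ η, ‖S η‖ ^ 2 := sum_le_sum_of_subset_of_nonneg (subset_univ _) fun _ _ _ => by positivity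
    _ = _ := by rw [hS_total, mul_comm]

section WeightedBoxSum

variable {G : Type*} [AddCommGroup G] [Fintype G]

theorem sum_sum_comp_sub (φ : G → ℝ) :
    ∑ c, ∑ d, φ (c - d) = Fintype.card G * ∑ x, φ x := by
  have h (c : G) : ∑ d, φ (c - d) = ∑ x, φ x :=
    Fintype.sum_equiv (Equiv.subLeft c) _ _ fun _ => rfl
  simp only [h, sum_const, card_univ, nsmul_eq_mul]

theorem abs_sum_sum_mul_le {ι κ : Type*} [Fintype ι] [Fintype κ] {X : ι → κ → ℝ} {B : ℝ}
    (hX : ∀ i j, |X i j| ≤ B) (w : ι → κ → ℝ) :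
    |∑ i, ∑ j, w i j * X i j| ≤ B * ∑ i, ∑ j, |w i j| := by
  rw [mul_sum]
  refine (abs_sum_le_sum_abs _ _).trans (sum_le_sum fun i _ => ?_)
  rw [mul_sum]
  refine (abs_sum_le_sum_abs _ _).trans (sum_le_sum fun j _ => ?_)
  rw [abs_mul, mul_comm]
  exact mul_le_mul_of_nonneg_right (hX i j) (abs_nonneg _)

def weightedBoxSum (f₁ f₂ f₃ f₄ : G × G → ℝ) (u v : G → ℝ) : ℝ :=
  ∑ a, ∑ b, ∑ c, ∑ d, f₁ (a, c) * f₂ (a, d) * f₃ (b, c) * f₄ (b, d) * u (a - b) * v (c - d)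

variable {f₁ f₂ f₃ f₄ : G × G → ℝ}

theorem weightedBoxSum_one_add (s : G → ℝ) :
    weightedBoxSum f₁ f₂ f₃ f₄ (1 + s) (1 + s) =
      weightedBoxSum f₁ f₂ f₃ f₄ 1 1 + (weightedBoxSum f₁ f₂ f₃ f₄ s 1 +
        weightedBoxSum f₁ f₂ f₃ f₄ 1 s + weightedBoxSum f₁ f₂ f₃ f₄ s s) := by
  simp only [weightedBoxSum, ← sum_add_distrib, Pi.add_apply, Pi.one_apply]
  exact sum_congr rfl fun a _ => sum_congr rfl fun b _ => sum_congr rfl fun c _ =>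
    sum_congr rfl fun d _ => by ring

theorem abs_weightedBoxSum_left_le {s : G → ℝ} {B : ℝ}
    (hs : ∀ g h : G → ℝ, (∀ a, |g a| ≤ 1) → (∀ b, |h b| ≤ 1) →
      |∑ a, ∑ b, g a * h b * s (a - b)| ≤ B)
    (hf₁ : ∀ x, |f₁ x| ≤ 1) (hf₂ : ∀ x, |f₂ x| ≤ 1) (hf₃ : ∀ x, |f₃ x| ≤ 1)
    (hf₄ : ∀ x, |f₄ x| ≤ 1) (v : G → ℝ) :
    |weightedBoxSum f₁ f₂ f₃ f₄ s v| ≤ B * ∑ c, ∑ d, |v (c - d)| := by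
  have hsum : weightedBoxSum f₁ f₂ f₃ f₄ s v = ∑ c, ∑ d, v (c - d) *
      ∑ a, ∑ b, (f₁ (a, c) * f₂ (a, d)) * (f₃ (b, c) * f₄ (b, d)) * s (a - b) := by
    rw [weightedBoxSum, sum_four_comm]
    simp only [mul_sum]
    exact sum_congr rfl fun c _ => sum_congr rfl fun d _ => sum_congr rfl fun a _ =>
      sum_congr rfl fun b _ => by ring
  rw [hsum]
  exact abs_sum_sum_mul_le (fun c d => hs _ _ (fun a => abs_mul_le_one (hf₁ _) (hf₂ _))
    (fun b => abs_mul_le_one (hf₃ _) (hf₄ _))) _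

theorem abs_weightedBoxSum_right_le {s : G → ℝ} {B : ℝ}
    (hs : ∀ g h : G → ℝ, (∀ a, |g a| ≤ 1) → (∀ b, |h b| ≤ 1) →
      |∑ a, ∑ b, g a * h b * s (a - b)| ≤ B)
    (hf₁ : ∀ x, |f₁ x| ≤ 1) (hf₂ : ∀ x, |f₂ x| ≤ 1) (hf₃ : ∀ x, |f₃ x| ≤ 1)
    (hf₄ : ∀ x, |f₄ x| ≤ 1) (u : G → ℝ) :
    |weightedBoxSum f₁ f₂ f₃ f₄ u s| ≤ B * ∑ a, ∑ b, |u (a - b)| := by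
  have hsum : weightedBoxSum f₁ f₂ f₃ f₄ u s = ∑ a, ∑ b, u (a - b) *
      ∑ c, ∑ d, (f₁ (a, c) * f₃ (b, c)) * (f₂ (a, d) * f₄ (b, d)) * s (c - d) := by
    simp only [weightedBoxSum, mul_sum]
    exact sum_congr rfl fun a _ => sum_congr rfl fun b _ => sum_congr rfl fun c _ =>
      sum_congr rfl fun d _ => by ring
  rw [hsum]
  exact abs_sum_sum_mul_le (fun a b => hs _ _ (fun c => abs_mul_le_one (hf₁ _) (hf₃ _))
    (fun d => abs_mul_le_one (hf₂ _) (hf₄ _))) _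

theorem abs_weightedBoxSum_one_add_sub_le {s : G → ℝ} {B : ℝ}
    (hs : ∀ g h : G → ℝ, (∀ a, |g a| ≤ 1) → (∀ b, |h b| ≤ 1) →
      |∑ a, ∑ b, g a * h b * s (a - b)| ≤ B)
    (hf₁ : ∀ x, |f₁ x| ≤ 1) (hf₂ : ∀ x, |f₂ x| ≤ 1) (hf₃ : ∀ x, |f₃ x| ≤ 1)
    (hf₄ : ∀ x, |f₄ x| ≤ 1) :
    |weightedBoxSum f₁ f₂ f₃ f₄ (1 + s) (1 + s) - weightedBoxSum f₁ f₂ f₃ f₄ 1 1| ≤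
      B * Fintype.card G * (2 * Fintype.card G + ∑ x, |s x|) := by
  have h₁ := abs_weightedBoxSum_left_le hs hf₁ hf₂ hf₃ hf₄ 1
  have h₂ := abs_weightedBoxSum_right_le hs hf₁ hf₂ hf₃ hf₄ 1
  have h₃ := abs_weightedBoxSum_left_le hs hf₁ hf₂ hf₃ hf₄ s
  rw [sum_sum_comp_sub (fun x => |s x|)] at h₃
  simp only [Pi.one_apply, abs_one] at h₁ h₂
  rw [weightedBoxSum_one_add, add_sub_cancel_left]
  calc _ ≤ |weightedBoxSum f₁ f₂ f₃ f₄ s 1| + |weightedBoxSum f₁ f₂ f₃ f₄ 1 s| +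
        |weightedBoxSum f₁ f₂ f₃ f₄ s s| := abs_add_three _ _ _
    _ ≤ _ := by
        simp only [sum_const, card_univ, nsmul_eq_mul, mul_one] at h₁ h₂
        linarith

end WeightedBoxSum

section NormalizedIndicator

variable {F : Type*} [Field F] [Fintype F]

open Classical in
noncomputable def normalizedIndicator (A : Subgroup Fˣ) (x : F) : ℝ :=
  if ∃ u ∈ A, (u : F) = x then Fintype.card F / Nat.card A else 0

variable {A : Subgroup Fˣ}

theorem normalizedIndicator_nonneg (x : F) : 0 ≤ normalizedIndicator A x := by
  unfold normalizedIndicator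
  split_ifs <;> positivity

variable [Fintype A]

theorem sum_normalizedIndicator_mul (φ : F → ℂ) :
    ∑ x, (normalizedIndicator A x : ℂ) * φ x =
      ((Fintype.card F / Nat.card A : ℝ) : ℂ) * ∑ u : A, φ ((u : Fˣ) : F) := by
  classical
  rw [mul_sum, eq_comm]
  refine Fintype.sum_of_injective (fun u : A => ((u : Fˣ) : F))
    (Units.val_injective.comp Subtype.val_injective) _ _ (fun x hx => ?_) (fun u => ?_)
  · have : ¬∃ u ∈ A, (u : F) = x := fun ⟨u, hu, hux⟩ => hx ⟨⟨u, hu⟩, hux⟩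
    simp [normalizedIndicator, this]
  · simp [normalizedIndicator, show ∃ v ∈ A, (v : F) = ((u : Fˣ) : F) from ⟨u, u.2, rfl⟩]

theorem sum_normalizedIndicator : ∑ x, normalizedIndicator A x = Fintype.card F := by
  have hA : (Nat.card A : ℝ) ≠ 0 := by exact_mod_cast Nat.card_pos.ne'
  apply Complex.ofReal_injective
  simpa [Nat.card_eq_fintype_card, hA] using sum_normalizedIndicator_mul (A := A) 1

theorem sum_abs_normalizedIndicator_sub_one_le :
    ∑ x, |normalizedIndicator A x - 1| ≤ 2 * Fintype.card F :=
  calc ∑ x, |normalizedIndicator A x - 1| ≤ ∑ x, (normalizedIndicator A x + 1) :=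
        sum_le_sum fun x _ => abs_sub_le_iff.2
          ⟨by linarith [normalizedIndicator_nonneg (A := A) x],
            by linarith [normalizedIndicator_nonneg (A := A) x]⟩
    _ = 2 * Fintype.card F := by
        rw [sum_add_distrib, sum_normalizedIndicator]
        simp
        ring

theorem norm_dft_normalizedIndicator_sub_one_le {ψ : AddChar F ℂ} (hψ : ψ.IsPrimitive) (ξ : F) :
    ‖dft ψ (fun x => ((normalizedIndicator A x - 1 : ℝ) : ℂ)) ξ‖ ≤
      Fintype.card F / Nat.card A * √(Fintype.card F) := by
  rcases eq_or_ne ξ 0 with rfl | hξ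
  · have hdft : dft ψ (fun x => ((normalizedIndicator A x - 1 : ℝ) : ℂ)) 0 = 0 := by
      simp only [dft, zero_mul, AddChar.map_zero_eq_one, mul_one, ← Complex.ofReal_sum,
        sum_sub_distrib, sum_normalizedIndicator]
      simp
    rw [hdft, norm_zero]
    positivity
  · have hdft : dft ψ (fun x => ((normalizedIndicator A x - 1 : ℝ) : ℂ)) ξ =
        ((Fintype.card F / Nat.card A : ℝ) : ℂ) * ∑ u : A, ψ (ξ * ((u : Fˣ) : F)) := by
      have hψξ : ∑ x, ψ (ξ * x) = 0 := by
        classical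
        simpa [mul_comm, hξ] using AddChar.sum_mulShift ξ hψ
      simp only [dft, Complex.ofReal_sub, Complex.ofReal_one, sub_mul, one_mul, sum_sub_distrib,
        hψξ, sub_zero]
      exact sum_normalizedIndicator_mul _
    rw [hdft, norm_mul, Complex.norm_real, Real.norm_of_nonneg (by positivity)]
    gcongr
    exact Real.le_sqrt_of_sq_le (norm_sq_sum_char_subgroup_le hψ A hξ)

end NormalizedIndicator

theorem abs_Nform_normalizedIndicator_le {F : Type} [Field F] [Fintype F] (A : Subgroup Fˣ)
    {f₁ f₂ f₃ f₄ : F × F → ℝ} (hf₁ : ∀ x, |f₁ x| ≤ 1) (hf₂ : ∀ x, |f₂ x| ≤ 1)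
    (hf₃ : ∀ x, |f₃ x| ≤ 1) (hf₄ : ∀ x, |f₄ x| ≤ 1) :
    |Nform f₁ f₂ f₃ f₄ (normalizedIndicator A)| ≤
      |Mform f₁ f₂ f₃ f₄| + 4 * √(Fintype.card F) / Nat.card A := by
  classical
  have hψ := AddChar.FiniteField.primitiveChar_to_Complex_isPrimitive F
  have hq : (0 : ℝ) < Fintype.card F := by exact_mod_cast Fintype.card_pos
  have hn : (0 : ℝ) < Nat.card A := by exact_mod_cast Nat.card_pos (α := A)
  set s : F → ℝ := fun x => normalizedIndicator A x - 1
  have hconv (g h : F → ℝ) (hg : ∀ a, |g a| ≤ 1) (hh : ∀ b, |h b| ≤ 1) :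
      |∑ a, ∑ b, g a * h b * s (a - b)| ≤
        Fintype.card F / Nat.card A * √(Fintype.card F) * Fintype.card F :=
    abs_sum_mul_mul_sub_le hψ (norm_dft_normalizedIndicator_sub_one_le hψ) hg hh
  have herr := abs_weightedBoxSum_one_add_sub_le hconv hf₁ hf₂ hf₃ hf₄
  rw [show 1 + s = normalizedIndicator A by funext; simp [s]] at herr
  have hNM : Nform f₁ f₂ f₃ f₄ (normalizedIndicator A) - Mform f₁ f₂ f₃ f₄ =
      (weightedBoxSum f₁ f₂ f₃ f₄ (normalizedIndicator A) (normalizedIndicator A) -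
        weightedBoxSum f₁ f₂ f₃ f₄ 1 1) / (Fintype.card F : ℝ) ^ 4 := by
    rw [sub_div]
    congr 1
    simp [Mform, weightedBoxSum]
  have hs : ∑ x, |s x| ≤ 2 * Fintype.card F := sum_abs_normalizedIndicator_sub_one_le
  set q : ℝ := (Fintype.card F : ℝ)
  set n : ℝ := (Nat.card A : ℝ)
  calc |Nform f₁ f₂ f₃ f₄ (normalizedIndicator A)|
      ≤ |Mform f₁ f₂ f₃ f₄| + |Nform f₁ f₂ f₃ f₄ (normalizedIndicator A) - Mform f₁ f₂ f₃ f₄| :=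
        le_add_of_sub_left_le (abs_sub_abs_le_abs_sub _ _)
    _ ≤ |Mform f₁ f₂ f₃ f₄| + q / n * √q * q * q * (2 * q + 2 * q) / q ^ 4 := by
        rw [hNM, abs_div, abs_of_pos (pow_pos hq 4)]
        gcongr
        exact herr.trans (by gcongr)
    _ = |Mform f₁ f₂ f₃ f₄| + 4 * √q / n := by
        field_simp
        ring

theorem sqrt_div_le_rpow_div_rpow {q n : ℝ} (hq : 1 ≤ q) (hn : q ^ ((2 : ℝ) / 3) ≤ n) :
    √q / n ≤ q ^ ((1 : ℝ) / 8) / n ^ ((1 : ℝ) / 4) := by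
  have hn0 : 0 < n := (Real.rpow_pos_of_pos (by linarith) _).trans_le hn
  have hsqrt : √q ≤ n :=
    calc √q = q ^ ((1 : ℝ) / 2) := Real.sqrt_eq_rpow q
      _ ≤ q ^ ((2 : ℝ) / 3) := Real.rpow_le_rpow_of_exponent_le hq (by norm_num)
      _ ≤ n := hn
  calc √q / n ≤ (√q / n) ^ ((1 : ℝ) / 4) :=
        Real.self_le_rpow_of_le_one (by positivity) ((div_le_one hn0).2 hsqrt) (by norm_num)
    _ = q ^ ((1 : ℝ) / 8) / n ^ ((1 : ℝ) / 4) := by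
        rw [Real.div_rpow (Real.sqrt_nonneg q) hn0.le, Real.sqrt_eq_rpow,
          ← Real.rpow_mul (by linarith)]
        norm_num

theorem stmt_9 :
    ∃ C : ℝ, 0 < C ∧
      ∀ (F : Type) [Field F] [Fintype F],
        ∀ A : Subgroup Fˣ,
          (Fintype.card F : ℝ) ^ ((2 : ℝ) / 3) ≤ (Nat.card A : ℝ) →
          ∀ σ : F → ℝ,
            (∀ x : F, (∃ u ∈ A, (u : F) = x) →
              σ x = (Fintype.card F : ℝ) / (Nat.card A : ℝ)) →
            (∀ x : F, (¬∃ u ∈ A, (u : F) = x) → σ x = 0) →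
            ∀ f₁ f₂ f₃ f₄ : F × F → ℝ,
              (∀ x, f₁ x ∈ Set.Icc (-1 : ℝ) 1) →
              (∀ x, f₂ x ∈ Set.Icc (-1 : ℝ) 1) →
              (∀ x, f₃ x ∈ Set.Icc (-1 : ℝ) 1) →
              (∀ x, f₄ x ∈ Set.Icc (-1 : ℝ) 1) →
              |Nform f₁ f₂ f₃ f₄ σ| ≤
                min (min (boxNorm f₁) (boxNorm f₂)) (min (boxNorm f₃) (boxNorm f₄)) +
                  C * (Fintype.card F : ℝ) ^ ((1 : ℝ) / 8) /
                    (Nat.card A : ℝ) ^ ((1 : ℝ) / 4) := by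
  refine ⟨4, by norm_num, fun F _ _ A hA σ hσ₁ hσ₂ f₁ f₂ f₃ f₄ hf₁ hf₂ hf₃ hf₄ => ?_⟩
  obtain rfl : σ = normalizedIndicator A := by
    funext x
    by_cases hx : ∃ u ∈ A, (u : F) = x
    · simp [normalizedIndicator, hx, hσ₁ x hx]
    · simp [normalizedIndicator, hx, hσ₂ x hx]
  have hq : (1 : ℝ) ≤ Fintype.card F := by exact_mod_cast Fintype.card_pos
  have hb {f : F × F → ℝ} (hf : ∀ x, f x ∈ Set.Icc (-1 : ℝ) 1) (x : F × F) : |f x| ≤ 1 :=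
    abs_le.2 (hf x)
  calc |Nform f₁ f₂ f₃ f₄ (normalizedIndicator A)|
      ≤ |Mform f₁ f₂ f₃ f₄| + 4 * (√(Fintype.card F) / Nat.card A) := by
        rw [← mul_div_assoc]
        exact abs_Nform_normalizedIndicator_le A (hb hf₁) (hb hf₂) (hb hf₃) (hb hf₄)
    _ ≤ _ := by
        rw [mul_div_assoc]
        gcongr ?_ + 4 * ?_
        · exact abs_Mform_le_min_boxNorm (hb hf₁) (hb hf₂) (hb hf₃) (hb hf₄)
        · exact sqrt_div_le_rpow_div_rpow hq hA
end

section
/- There exists an absolute constant C > 0 such that the following holds. Let q be a prime power, let A be a multiplicative subgroup of F_q^* with |A| ≥ q^{2/3}, and let σ : F_q → ℝ be defined by σ(x) = q/|A| if x ∈ A and σ(x) = 0 otherwise. Then for all functions f, g : F_q → [−1, 1], |q^{−2} Σ_{x,y ∈ F_q} f(x)·g(y)·σ(x−y) − q^{−2} Σ_{x,y ∈ F_q} f(x)·g(y)| ≤ C·q^{1/2}/|A|. -/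
/-!
Put `h = σ - 1`, so that the quantity to bound is `q⁻² ∑ f(x) g(y) h(x - y)`. Expanding in the
additive characters of `F` turns this into `q⁻³ ∑_ψ f̂(ψ) ĝ(ψ⁻¹) ĥ(ψ⁻¹)`, and Cauchy–Schwarz with
Parseval bounds it by `q⁻¹ max_ψ |ĥ(ψ)|`. Now `ĥ` vanishes at the trivial character, and `h` is
invariant under multiplication by `A`, so `ĥ` takes the same value at the `|A|` distinct
characters `x ↦ ψ(a x)`, `a ∈ A`. Parseval then gives `|A| |ĥ(ψ)|² ≤ q ∑ h² ≤ q³ / |A|`, whence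
the bound with `C = 1`.
-/

open Finset

section FiniteAbelianGroup

variable {G : Type*} [AddCommGroup G] [Fintype G]

noncomputable def charSum (f : G → ℂ) (ψ : AddChar G ℂ) : ℂ := ∑ x, f x * ψ x

lemma sum_mul_addChar_apply [DecidableEq G] (c : ℂ) (a : G) :
    ∑ ψ : AddChar G ℂ, c * ψ a = if a = 0 then Fintype.card G * c else 0 := by
  rw [← mul_sum, AddChar.sum_apply_eq_ite]
  split_ifs <;> ring

lemma sum_charSum_mul_charSum_inv_mul_charSum_inv (f g h : G → ℂ) :
    ∑ ψ : AddChar G ℂ, charSum f ψ * charSum g ψ⁻¹ * charSum h ψ⁻¹ =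
      Fintype.card G * ∑ x, ∑ y, f x * g y * h (x - y) := by
  classical
  have expand (ψ : AddChar G ℂ) : charSum f ψ * charSum g ψ⁻¹ * charSum h ψ⁻¹ =
      ∑ x, ∑ y, ∑ u, f x * g y * h u * ψ (x - y - u) := by
    rw [charSum, charSum, charSum, sum_mul_sum, sum_mul]
    simp_rw [sum_mul, mul_sum, AddChar.inv_apply, sub_eq_add_neg, AddChar.map_add_eq_mul]
    exact sum_congr rfl fun _ _ => sum_congr rfl fun _ _ => sum_congr rfl fun _ _ => by
      ring
  simp only [expand]
  rw [sum_comm]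
  simp_rw [sum_comm (s := (univ : Finset (AddChar G ℂ))), sum_mul_addChar_apply, mul_sum]
  refine sum_congr rfl fun x _ => sum_congr rfl fun y _ => ?_
  rw [sum_eq_single (x - y) (fun u _ hu => if_neg fun h => hu (sub_eq_zero.1 h).symm)
    (by simp)]
  simp

lemma sum_norm_charSum_sq (f : G → ℂ) :
    ∑ ψ : AddChar G ℂ, ‖charSum f ψ‖ ^ 2 = Fintype.card G * ∑ x, ‖f x‖ ^ 2 := by
  classical
  have expand (ψ : AddChar G ℂ) : (‖charSum f ψ‖ ^ 2 : ℂ) =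
      ∑ x, ∑ y, f x * starRingEnd ℂ (f y) * ψ (x - y) := by
    rw [← Complex.mul_conj']
    simp only [charSum, map_sum, map_mul, ← AddChar.map_neg_eq_conj, sum_mul_sum,
      sub_eq_add_neg, AddChar.map_add_eq_mul]
    exact sum_congr rfl fun _ _ => sum_congr rfl fun _ _ => by ring
  apply Complex.ofReal_injective
  push_cast
  simp only [expand]
  rw [sum_comm]
  simp_rw [sum_comm (s := (univ : Finset (AddChar G ℂ))), sum_mul_addChar_apply, mul_sum]
  refine sum_congr rfl fun x _ => ?_
  rw [sum_eq_single x (fun y _ hy => if_neg (sub_ne_zero.2 hy.symm)) (by simp)]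
  simp [Complex.mul_conj']

lemma norm_sum_mul_mul_sub_le_s10 (f g h : G → ℂ) {M : ℝ} (hM : ∀ ψ, ‖charSum h ψ‖ ≤ M) :
    ‖∑ x, ∑ y, f x * g y * h (x - y)‖ ≤ M * √(∑ x, ‖f x‖ ^ 2) * √(∑ y, ‖g y‖ ^ 2) := by
  have hM0 : 0 ≤ M := (norm_nonneg _).trans (hM 1)
  have hq : (0 : ℝ) < Fintype.card G := Nat.cast_pos.2 Fintype.card_pos
  have hinv : ∑ ψ : AddChar G ℂ, ‖charSum g ψ⁻¹‖ ^ 2 = ∑ ψ : AddChar G ℂ, ‖charSum g ψ‖ ^ 2 :=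
    Equiv.sum_comp (Equiv.inv (AddChar G ℂ)) fun ψ => ‖charSum g ψ‖ ^ 2
  refine le_of_mul_le_mul_left ?_ hq
  calc (Fintype.card G : ℝ) * ‖∑ x, ∑ y, f x * g y * h (x - y)‖
      = ‖∑ ψ : AddChar G ℂ, charSum f ψ * charSum g ψ⁻¹ * charSum h ψ⁻¹‖ := by
        rw [sum_charSum_mul_charSum_inv_mul_charSum_inv, norm_mul, Complex.norm_natCast]
    _ ≤ ∑ ψ : AddChar G ℂ, ‖charSum f ψ‖ * ‖charSum g ψ⁻¹‖ * M := by
        refine (norm_sum_le _ _).trans (sum_le_sum fun ψ _ => ?_)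
        rw [norm_mul, norm_mul]
        exact mul_le_mul_of_nonneg_left (hM _) (by positivity)
    _ ≤ √(∑ ψ : AddChar G ℂ, ‖charSum f ψ‖ ^ 2) *
          √(∑ ψ : AddChar G ℂ, ‖charSum g ψ⁻¹‖ ^ 2) * M := by
        rw [← sum_mul]
        exact mul_le_mul_of_nonneg_right (Real.sum_mul_le_sqrt_mul_sqrt _ _ _) hM0
    _ = Fintype.card G * (M * √(∑ x, ‖f x‖ ^ 2) * √(∑ y, ‖g y‖ ^ 2)) := by
        rw [hinv, sum_norm_charSum_sq, sum_norm_charSum_sq, Real.sqrt_mul hq.le,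
          Real.sqrt_mul hq.le]
        have := Real.mul_self_sqrt hq.le
        linear_combination (M * √(∑ x, ‖f x‖ ^ 2) * √(∑ y, ‖g y‖ ^ 2)) * this

end FiniteAbelianGroup

section FiniteCommRing

variable {R : Type*} [CommRing R] [Fintype R]

lemma charSum_mulShift_of_forall_mul_eq {f : R → ℂ} {b : Rˣ} (hf : ∀ x, f (b * x) = f x)
    (ψ : AddChar R ℂ) : charSum f (ψ.mulShift b) = charSum f ψ := by
  simpa [charSum, hf] using Equiv.sum_comp (Units.mulLeft b) fun x => f x * ψ x

lemma card_mul_norm_charSum_sq_le {ψ : AddChar R ℂ} (hψ : ψ.IsPrimitive) {A : Subgroup Rˣ}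
    {f : R → ℂ} (hf : ∀ a ∈ A, ∀ x, f (a * x) = f x) :
    Nat.card A * ‖charSum f ψ‖ ^ 2 ≤ Fintype.card R * ∑ x, ‖f x‖ ^ 2 := by
  classical
  have hinj : Function.Injective fun a : A => ψ.mulShift ((a : Rˣ) : R) :=
    (AddChar.to_mulShift_inj_of_isPrimitive hψ).comp
      (Units.val_injective.comp Subtype.val_injective)
  rw [← sum_norm_charSum_sq]
  calc (Nat.card A : ℝ) * ‖charSum f ψ‖ ^ 2
      = ∑ a : A, ‖charSum f (ψ.mulShift ((a : Rˣ) : R))‖ ^ 2 := by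
        rw [Nat.card_eq_fintype_card, ← nsmul_eq_mul, ← card_univ, ← sum_const]
        exact sum_congr rfl fun a _ => by rw [charSum_mulShift_of_forall_mul_eq (hf a a.2)]
    _ = ∑ χ ∈ univ.map ⟨_, hinj⟩, ‖charSum f χ‖ ^ 2 :=
        (sum_map univ ⟨_, hinj⟩ fun χ => ‖charSum f χ‖ ^ 2).symm
    _ ≤ ∑ χ, ‖charSum f χ‖ ^ 2 := sum_le_univ_sum_of_nonneg fun _ => sq_nonneg _

end FiniteCommRing

lemma exists_mem_val_eq_mul_iff {M : Type*} [Monoid M] {A : Subgroup Mˣ} {a : Mˣ} (ha : a ∈ A)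
    (x : M) : (∃ u ∈ A, (u : M) = a * x) ↔ ∃ u ∈ A, (u : M) = x := by
  constructor
  · rintro ⟨u, hu, hux⟩
    exact ⟨a⁻¹ * u, A.mul_mem (A.inv_mem ha) hu, by simp [hux]⟩
  · rintro ⟨u, hu, rfl⟩
    exact ⟨a * u, A.mul_mem ha hu, rfl⟩

lemma card_exists_mem_val_eq {M : Type*} [Monoid M] (A : Subgroup Mˣ) :
    Nat.card {x : M // ∃ u ∈ A, (u : M) = x} = Nat.card A :=
  Nat.card_image_of_injective Units.val_injective (A : Set Mˣ)

section ScaledIndicator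

variable {F : Type*} [Field F] [Fintype F] {A : Subgroup Fˣ} {σ : F → ℝ}

lemma sum_eq_card_of_scaled_indicator
    (hσA : ∀ x : F, (∃ u ∈ A, (u : F) = x) → σ x = Fintype.card F / Nat.card A)
    (hσ0 : ∀ x : F, (¬∃ u ∈ A, (u : F) = x) → σ x = 0) :
    ∑ x, σ x = Fintype.card F := by
  classical
  have hn : (Nat.card A : ℝ) ≠ 0 := Nat.cast_ne_zero.2 Nat.card_pos.ne'
  have hσ : ∀ x, σ x = if ∃ u ∈ A, (u : F) = x then (Fintype.card F : ℝ) / Nat.card A else 0 :=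
    fun x => by split_ifs with hx; exacts [hσA x hx, hσ0 x hx]
  rw [sum_congr rfl fun x _ => hσ x, sum_ite, sum_const_zero, add_zero, sum_const, nsmul_eq_mul,
    ← Fintype.card_subtype, ← Nat.card_eq_fintype_card, card_exists_mem_val_eq]
  field_simp

lemma apply_mul_of_scaled_indicator
    (hσA : ∀ x : F, (∃ u ∈ A, (u : F) = x) → σ x = Fintype.card F / Nat.card A)
    (hσ0 : ∀ x : F, (¬∃ u ∈ A, (u : F) = x) → σ x = 0) {a : Fˣ} (ha : a ∈ A) (x : F) :
    σ (a * x) = σ x := by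
  by_cases hx : ∃ u ∈ A, (u : F) = x
  · rw [hσA x hx, hσA _ ((exists_mem_val_eq_mul_iff ha x).2 hx)]
  · rw [hσ0 x hx, hσ0 _ (mt (exists_mem_val_eq_mul_iff ha x).1 hx)]

lemma sum_sub_one_sq_of_scaled_indicator
    (hσA : ∀ x : F, (∃ u ∈ A, (u : F) = x) → σ x = Fintype.card F / Nat.card A)
    (hσ0 : ∀ x : F, (¬∃ u ∈ A, (u : F) = x) → σ x = 0) :
    ∑ x, (σ x - 1) ^ 2 = (Fintype.card F : ℝ) ^ 2 / Nat.card A - Fintype.card F := by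
  have hsq (x : F) : (σ x - 1) ^ 2 = (Fintype.card F / Nat.card A - 2) * σ x + 1 := by
    by_cases hx : ∃ u ∈ A, (u : F) = x
    · rw [hσA x hx]; ring
    · rw [hσ0 x hx]; ring
  rw [sum_congr rfl fun x _ => hsq x, sum_add_distrib, ← mul_sum,
    sum_eq_card_of_scaled_indicator hσA hσ0, sum_const, card_univ, nsmul_one]
  ring

lemma norm_charSum_sub_one_le
    (hσA : ∀ x : F, (∃ u ∈ A, (u : F) = x) → σ x = Fintype.card F / Nat.card A)
    (hσ0 : ∀ x : F, (¬∃ u ∈ A, (u : F) = x) → σ x = 0) (ψ : AddChar F ℂ) :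
    ‖charSum (fun x => ((σ x - 1 : ℝ) : ℂ)) ψ‖ ≤
      Fintype.card F * √(Fintype.card F) / Nat.card A := by
  have hn : (0 : ℝ) < Nat.card A := Nat.cast_pos.2 Nat.card_pos
  by_cases hψ : ψ = 1
  · have hmean : ∑ x, (σ x - 1) = 0 := by
      rw [sum_sub_distrib, sum_eq_card_of_scaled_indicator hσA hσ0]
      simp
    simp only [hψ, charSum, AddChar.one_apply, mul_one, ← Complex.ofReal_sum, hmean]
    simp only [Complex.ofReal_zero, norm_zero]
    positivity
  have horbit := card_mul_norm_charSum_sq_le (AddChar.IsPrimitive.of_ne_one hψ)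
    (A := A) (f := fun x => ((σ x - 1 : ℝ) : ℂ))
    (fun a ha x => by rw [apply_mul_of_scaled_indicator hσA hσ0 ha x])
  simp only [Complex.norm_real, Real.norm_eq_abs, sq_abs,
    sum_sub_one_sq_of_scaled_indicator hσA hσ0] at horbit
  refine (pow_le_pow_iff_left₀ (norm_nonneg _) (by positivity) two_ne_zero).1 ?_
  rw [div_pow, mul_pow, Real.sq_sqrt (Nat.cast_nonneg _), le_div_iff₀ (by positivity)]
  set q : ℝ := (Fintype.card F : ℝ)
  set n : ℝ := (Nat.card A : ℝ)
  calc ‖charSum (fun x => ((σ x - 1 : ℝ) : ℂ)) ψ‖ ^ 2 * n ^ 2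
      = n * (n * ‖charSum (fun x => ((σ x - 1 : ℝ) : ℂ)) ψ‖ ^ 2) := by ring
    _ ≤ n * (q * (q ^ 2 / n - q)) := mul_le_mul_of_nonneg_left horbit hn.le
    _ = q ^ 2 * q - n * q ^ 2 := by field_simp
    _ ≤ q ^ 2 * q := sub_le_self _ (by positivity)

end ScaledIndicator

lemma sum_sq_le_card_of_mem_Icc {α : Type*} [Fintype α] {f : α → ℝ}
    (hf : ∀ x, f x ∈ Set.Icc (-1 : ℝ) 1) : ∑ x, f x ^ 2 ≤ Fintype.card α := by
  simpa using sum_le_sum fun x (_ : x ∈ univ) =>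
    (sq_le_one_iff_abs_le_one (f x)).2 (abs_le.2 (hf x))

theorem stmt_10 :
    ∃ C : ℝ, 0 < C ∧
      ∀ (F : Type) [Field F] [Fintype F],
        ∀ A : Subgroup Fˣ,
          (Fintype.card F : ℝ) ^ ((2 : ℝ) / 3) ≤ (Nat.card A : ℝ) →
          ∀ σ : F → ℝ,
            (∀ x : F, (∃ u ∈ A, (u : F) = x) →
              σ x = (Fintype.card F : ℝ) / (Nat.card A : ℝ)) →
            (∀ x : F, (¬∃ u ∈ A, (u : F) = x) → σ x = 0) →
            ∀ f g : F → ℝ,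
              (∀ x, f x ∈ Set.Icc (-1 : ℝ) 1) →
              (∀ x, g x ∈ Set.Icc (-1 : ℝ) 1) →
              |(∑ x : F, ∑ y : F, f x * g y * σ (x - y)) / (Fintype.card F : ℝ) ^ 2 -
                  (∑ x : F, ∑ y : F, f x * g y) / (Fintype.card F : ℝ) ^ 2| ≤
                C * (Fintype.card F : ℝ) ^ ((1 : ℝ) / 2) / (Nat.card A : ℝ) := by
  refine ⟨1, one_pos, fun F _ _ A _ σ hσA hσ0 f g hf hg => ?_⟩
  set q : ℝ := (Fintype.card F : ℝ)
  set n : ℝ := (Nat.card A : ℝ)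
  have hq : 0 < q := Nat.cast_pos.2 Fintype.card_pos
  have hn : 0 < n := Nat.cast_pos.2 Nat.card_pos
  have hD : |∑ x, ∑ y, f x * g y * (σ (x - y) - 1)| ≤ q * √q / n * √q * √q := by
    have := norm_sum_mul_mul_sub_le_s10 (fun x => (f x : ℂ)) (fun y => (g y : ℂ)) _
      (norm_charSum_sub_one_le hσA hσ0)
    simp only [← Complex.ofReal_mul, ← Complex.ofReal_sum, Complex.norm_real,
      Real.norm_eq_abs, sq_abs] at this
    refine this.trans ?_
    gcongr
    exacts [sum_sq_le_card_of_mem_Icc hf, sum_sq_le_card_of_mem_Icc hg]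
  have hdiff : (∑ x, ∑ y, f x * g y * σ (x - y)) / q ^ 2 - (∑ x, ∑ y, f x * g y) / q ^ 2 =
      (∑ x, ∑ y, f x * g y * (σ (x - y) - 1)) / q ^ 2 := by
    simp only [div_sub_div_same, ← sum_sub_distrib, mul_sub, mul_one]
  rw [hdiff, abs_div, abs_of_pos (pow_pos hq 2), div_le_iff₀ (by positivity), one_mul,
    ← Real.sqrt_eq_rpow]
  calc |∑ x, ∑ y, f x * g y * (σ (x - y) - 1)| ≤ q * √q / n * √q * √q := hD
    _ = √q / n * q ^ 2 := by rw [mul_assoc _ √q, Real.mul_self_sqrt hq.le]; ring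
end

section
/- Let H be a k-uniform hypergraph with n vertices and m edges, where k ≥ 2 and m ≥ n/k, and let α(H) denote the independence number of H (the maximum size of a set of vertices containing no edge of H). Then α(H) ≥ (1 − 1/k)·⌊((1/k)·(n^k/m))^{1/(k−1)}⌋. -/
/-!
Deletion method. Put `t = ⌊(n^k / (k m))^(1/(k-1))⌋`, so that `k m t^(k-1) ≤ n^k` and `t ≤ n`.
Averaged over all `t`-subsets `S` of the vertices, the number of edges inside `S` is
`m C(t,k) / C(n,k) ≤ m (t/n)^k ≤ t/k`. Deleting one vertex of each edge inside a good `S` leaves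
an independent set of size at least `t - t/k`.
-/

open Finset

theorem Nat.descFactorial_mul_pow_le_pow_mul_descFactorial {t n : ℕ} (h : t ≤ n) (k : ℕ) :
    t.descFactorial k * n ^ k ≤ t ^ k * n.descFactorial k := by
  have factor_le (i : ℕ) : (t - i) * n ≤ t * (n - i) := by
    rw [Nat.sub_mul, Nat.mul_sub, mul_comm t i]
    exact Nat.sub_le_sub_left (Nat.mul_le_mul_left i h) _
  calc t.descFactorial k * n ^ k = ∏ i ∈ range k, (t - i) * n := by
        rw [descFactorial_eq_prod_range, prod_mul_distrib, prod_const, card_range]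
    _ ≤ ∏ i ∈ range k, t * (n - i) := prod_le_prod' fun i _ => factor_le i
    _ = t ^ k * n.descFactorial k := by
        rw [prod_mul_distrib, prod_const, card_range, descFactorial_eq_prod_range]

theorem Nat.choose_mul_pow_le_pow_mul_choose {t n : ℕ} (h : t ≤ n) (k : ℕ) :
    t.choose k * n ^ k ≤ t ^ k * n.choose k := by
  have := Nat.descFactorial_mul_pow_le_pow_mul_descFactorial h k
  rw [Nat.descFactorial_eq_factorial_mul_choose, Nat.descFactorial_eq_factorial_mul_choose,
    mul_assoc, mul_left_comm (t ^ k)] at this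
  exact Nat.le_of_mul_le_mul_left this k.factorial_pos

theorem Nat.floor_rpow_inv_pow_le {y : ℝ} (hy : 0 ≤ y) {p : ℕ} (hp : p ≠ 0) :
    (⌊y ^ (p⁻¹ : ℝ)⌋₊ : ℝ) ^ p ≤ y :=
  calc (⌊y ^ (p⁻¹ : ℝ)⌋₊ : ℝ) ^ p ≤ (y ^ (p⁻¹ : ℝ)) ^ p :=
        pow_le_pow_left₀ (Nat.cast_nonneg _) (Nat.floor_le (by positivity)) p
    _ = y := Real.rpow_inv_natCast_pow hy hp

theorem Nat.mul_le_of_cast_le_div {K : Type*} [Semifield K] [LinearOrder K]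
    [IsStrictOrderedRing K]
    {a b c : ℕ} (h : (a : K) ≤ c / b) : b * a ≤ c := by
  rcases b.eq_zero_or_pos with rfl | hb
  · simp
  · exact_mod_cast (le_div_iff₀' (by positivity)).1 h

theorem Nat.le_of_pow_pred_le_pow_div {K : Type*} [Semifield K] [LinearOrder K]
    [IsStrictOrderedRing K] {k m n t : ℕ} (hk : 1 < k) (hnm : n ≤ m)
    (ht : (t : K) ^ (k - 1) ≤ (n : K) ^ k / m) : t ≤ n := by
  have hpow : (n : K) ^ k / m ≤ (n : K) ^ (k - 1) := by
    refine div_le_of_le_mul₀ (by positivity) (by positivity) ?_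
    rw [← pow_sub_one_mul (by omega : k ≠ 0)]
    gcongr
  exact_mod_cast (pow_le_pow_iff_left₀ (by positivity) (by positivity) (by omega)).1 (ht.trans hpow)

section Hypergraph

variable {α : Type*} [DecidableEq α]

def IsIndependent (E : Finset (Finset α)) (I : Finset α) : Prop := ∀ e ∈ E, ¬e ⊆ I

theorem exists_isIndependent_subset {E : Finset (Finset α)}
    (hE : ∀ e ∈ E, e.Nonempty) (S : Finset α) :
    ∃ I ⊆ S, IsIndependent E I ∧ #S ≤ #I + #{e ∈ E | e ⊆ S} := by
  set F := {e ∈ E | e ⊆ S}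
  choose f hf using fun e : F => hE e (mem_filter.1 e.2).1
  refine ⟨S \ univ.image f, sdiff_subset, fun e he heI => ?_, ?_⟩
  · have heF : e ∈ F := mem_filter.2 ⟨he, heI.trans sdiff_subset⟩
    exact (mem_sdiff.1 (heI (hf ⟨e, heF⟩))).2 (mem_image_of_mem f (mem_univ _))
  · calc #S ≤ #(S \ univ.image f) + #(univ.image f) := card_le_card_sdiff_add_card
      _ ≤ #(S \ univ.image f) + #F := by
        gcongr; exact card_image_le.trans (card_univ.trans (Fintype.card_coe F)).le

variable [Fintype α]

theorem sum_card_filter_subset_powersetCard {E : Finset (Finset α)} {k t : ℕ}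
    (hE : ∀ e ∈ E, #e = k) (hkt : k ≤ t) :
    ∑ S ∈ powersetCard t univ, #{e ∈ E | e ⊆ S} = #E * (Fintype.card α - k).choose (t - k) := by
  calc ∑ S ∈ powersetCard t univ, #{e ∈ E | e ⊆ S}
      = ∑ e ∈ E, #{S ∈ powersetCard t univ | e ⊆ S} :=
        (sum_card_bipartiteAbove_eq_sum_card_bipartiteBelow (fun (e S : Finset α) => e ⊆ S)
          (s := E) (t := powersetCard t univ)).symm
    _ = ∑ _e ∈ E, (Fintype.card α - k).choose (t - k) := sum_congr rfl fun e he => by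
        rw [← card_univ, ← hE e he]
        exact card_filter_powersetCard_subset e univ t (subset_univ e) (hE e he ▸ hkt)
    _ = #E * (Fintype.card α - k).choose (t - k) := by rw [sum_const, smul_eq_mul]

theorem exists_card_filter_subset_mul_pow_le {E : Finset (Finset α)} {k t : ℕ}
    (hE : ∀ e ∈ E, #e = k) (hkt : k ≤ t) (htn : t ≤ Fintype.card α) :
    ∃ S ∈ powersetCard t univ, #{e ∈ E | e ⊆ S} * Fintype.card α ^ k ≤ #E * t ^ k := by
  set n := Fintype.card α
  obtain ⟨S, hS, hle⟩ : ∃ S ∈ powersetCard t univ,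
      #{e ∈ E | e ⊆ S} * n.choose t ≤ #E * (n - k).choose (t - k) := by
    refine exists_le_of_sum_le (powersetCard_nonempty.2 (by simpa using htn)) ?_
    rw [← sum_mul, sum_card_filter_subset_powersetCard hE hkt, sum_const, card_powersetCard,
      card_univ, smul_eq_mul, mul_comm]
  refine ⟨S, hS, ?_⟩
  set c := #{e ∈ E | e ⊆ S}
  have hchoose : c * n.choose k ≤ #E * t.choose k := by
    refine Nat.le_of_mul_le_mul_right ?_ (n.choose_pos htn)
    calc c * n.choose k * n.choose t = c * n.choose t * n.choose k := by ring
      _ ≤ #E * (n - k).choose (t - k) * n.choose k := by gcongr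
      _ = #E * t.choose k * n.choose t := by
          rw [mul_assoc, mul_assoc, mul_comm (t.choose k), Nat.choose_mul hkt,
            mul_comm (n.choose k)]
  refine Nat.le_of_mul_le_mul_right ?_ (n.choose_pos (hkt.trans htn))
  calc c * n ^ k * n.choose k = c * n.choose k * n ^ k := by ring
    _ ≤ #E * (t.choose k * n ^ k) := by rw [← mul_assoc]; gcongr
    _ ≤ #E * (t ^ k * n.choose k) :=
        Nat.mul_le_mul_left _ (Nat.choose_mul_pow_le_pow_mul_choose htn k)
    _ = #E * t ^ k * n.choose k := by ring

theorem exists_isIndependent_mul_le {E : Finset (Finset α)} {k t : ℕ} (hk : 0 < k)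
    (hE : ∀ e ∈ E, #e = k) (htn : t ≤ Fintype.card α)
    (hm : k * #E * t ^ (k - 1) ≤ Fintype.card α ^ k) :
    ∃ I, IsIndependent E I ∧ k * t ≤ k * #I + t := by
  set n := Fintype.card α
  obtain ⟨S, hS, hc⟩ : ∃ S ∈ powersetCard t univ, k * #{e ∈ E | e ⊆ S} ≤ t := by
    rcases lt_or_ge t k with htk | hkt
    · obtain ⟨S, hS⟩ :=
        powersetCard_nonempty (s := (univ : Finset α)) (n := t) |>.2 (by rwa [card_univ])
      refine ⟨S, hS, ?_⟩
      rw [filter_false_of_mem fun e he heS => ?_, card_empty, mul_zero]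
      · exact Nat.zero_le t
      · have := card_le_card heS
        rw [hE e he, (mem_powersetCard.1 hS).2] at this
        omega
    · obtain ⟨S, hS, hle⟩ := exists_card_filter_subset_mul_pow_le hE hkt htn
      refine ⟨S, hS, Nat.le_of_mul_le_mul_right ?_ (pow_pos (hk.trans_le (hkt.trans htn)) k)⟩
      calc k * #{e ∈ E | e ⊆ S} * n ^ k ≤ k * (#E * t ^ k) := by rw [mul_assoc]; gcongr
        _ = k * #E * t ^ (k - 1) * t := by rw [← pow_sub_one_mul hk.ne']; ring
        _ ≤ n ^ k * t := by gcongr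
        _ = t * n ^ k := mul_comm _ _
  obtain ⟨I, -, hI, hcard⟩ :=
    exists_isIndependent_subset (fun e he => card_pos.1 (hE e he ▸ hk)) S
  rw [(mem_powersetCard.1 hS).2] at hcard
  refine ⟨I, hI, ?_⟩
  calc k * t ≤ k * #I + k * #{e ∈ E | e ⊆ S} := by rw [← mul_add]; gcongr
    _ ≤ k * #I + t := by gcongr

end Hypergraph

theorem stmt_13 (V : Type) [Fintype V] [DecidableEq V]
    (k n m : ℕ) (hk : 2 ≤ k)
    (E : Finset (Finset V)) (hunif : ∀ e ∈ E, e.card = k)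
    (hn : Fintype.card V = n) (hm : E.card = m)
    (hmn : (n : ℝ) / (k : ℝ) ≤ (m : ℝ)) :
    ∃ I : Finset V, (∀ e ∈ E, ¬e ⊆ I) ∧
      (1 - 1 / (k : ℝ)) *
          (⌊((1 / (k : ℝ)) * ((n : ℝ) ^ k / (m : ℝ))) ^ ((1 : ℝ) / ((k : ℝ) - 1))⌋₊ : ℝ) ≤
        (I.card : ℝ) := by
  have hk0 : 0 < k := by omega
  have hnkm : n ≤ k * m := by
    rw [div_le_iff₀ (by positivity)] at hmn
    exact_mod_cast (by linarith : (n : ℝ) ≤ k * m)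
  have hexp : (1 : ℝ) / ((k : ℝ) - 1) = ((k - 1 : ℕ) : ℝ)⁻¹ := by
    rw [Nat.cast_sub (by omega : 1 ≤ k), Nat.cast_one, one_div]
  have hy : (1 / (k : ℝ)) * ((n : ℝ) ^ k / (m : ℝ)) = (n : ℝ) ^ k / ((k * m : ℕ) : ℝ) := by
    push_cast; field_simp
  rw [hexp, hy]
  set t := ⌊((n : ℝ) ^ k / ((k * m : ℕ) : ℝ)) ^ ((k - 1 : ℕ) : ℝ)⁻¹⌋₊
  have ht : (t : ℝ) ^ (k - 1) ≤ (n : ℝ) ^ k / ((k * m : ℕ) : ℝ) :=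
    Nat.floor_rpow_inv_pow_le (by positivity) (by omega)
  have htn : t ≤ n := Nat.le_of_pow_pred_le_pow_div hk hnkm ht
  have hkmt : k * m * t ^ (k - 1) ≤ n ^ k :=
    Nat.mul_le_of_cast_le_div (K := ℝ) (by exact_mod_cast ht)
  obtain ⟨I, hI, hcard⟩ := exists_isIndependent_mul_le hk0 hunif (hn ▸ htn) (hn ▸ hm ▸ hkmt)
  refine ⟨I, hI, ?_⟩
  have hcard' : (k : ℝ) * t ≤ k * #I + t := by exact_mod_cast hcard
  calc (1 - 1 / (k : ℝ)) * t = (k * t - t) / k := by field_simp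
    _ ≤ #I := by rw [div_le_iff₀ (by positivity)]; linarith
end
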